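/- arXiv:1406.5202 — 8 statements merged into one kernel-verified Lean document; each statement's English description precedes it below -/
import Mathlib

section
/- Let u and v be distinct permutations in S_n with ℓ(v) ≥ ℓ(u). Then there exists a transposition t = (i j) such that ℓ(vt) < ℓ(v) and ℓ(ut) > ℓ(u). -/
open Equiv

open Finset

/-- The number of inversions of a permutation of `Fin n`. -/
def invLen {n : ℕ} (z : Perm (Fin n)) : ℕ :=
  (Finset.univ.filter fun p : Fin n × Fin n => p.1 < p.2 ∧ z p.2 < z p.1).card

/-- `t` is a transposition. -/
def IsTransposition {n : ℕ} (t : Perm (Fin n)) : Prop :=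
  ∃ i j : Fin n, i ≠ j ∧ t = Equiv.swap i j

/-- One step in the Bruhat order: right multiplication by a transposition which
increases the length. -/
def BruhatStep {n : ℕ} (u v : Perm (Fin n)) : Prop :=
  (∃ t, IsTransposition t ∧ v = u * t) ∧ invLen u < invLen v

/-- The strong Bruhat order on the symmetric group. -/
def BruhatLE {n : ℕ} (u v : Perm (Fin n)) : Prop :=
  Relation.ReflTransGen BruhatStep u v

/-- Strict Bruhat order. -/
def BruhatLT {n : ℕ} (u v : Perm (Fin n)) : Prop := BruhatLE u v ∧ u ≠ v

/-- Cover relation in the (graded) Bruhat order. -/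
def BruhatCov {n : ℕ} (u v : Perm (Fin n)) : Prop :=
  BruhatLE u v ∧ invLen v = invLen u + 1

/-- The transposition `(i k)` is inversion-minimal on `(u,v)`: `[i,k]` is an
inclusion-minimal interval `[p,q]` with `v p > v q` and `u p < u q`. -/
def InvMinimal {n : ℕ} (u v : Perm (Fin n)) (i k : Fin n) : Prop :=
  i < k ∧ v k < v i ∧ u i < u k ∧
  ∀ p q : Fin n, i ≤ p → p < q → q ≤ k → ¬(p = i ∧ q = k) → ¬(v q < v p ∧ u p < u q)

/-- The vector `(z 0, …, z (n-1))` in `ℝⁿ` associated to a permutation. -/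
def permVec {n : ℕ} (z : Perm (Fin n)) : Fin n → ℝ := fun i => ((z i : ℕ) : ℝ)

namespace Aux1


/-- Inversion set. -/
def invSet {n : ℕ} (z : Perm (Fin n)) : Finset (Fin n × Fin n) :=
  Finset.univ.filter fun p : Fin n × Fin n => p.1 < p.2 ∧ z p.2 < z p.1

lemma invLen_eq {n : ℕ} (z : Perm (Fin n)) : invLen z = (invSet z).card := rfl

lemma mem_invSet {n : ℕ} (z : Perm (Fin n)) (p : Fin n × Fin n) :
    p ∈ invSet z ↔ p.1 < p.2 ∧ z p.2 < z p.1 := by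
  simp [invSet]

lemma key_lt {n : ℕ} (w : Perm (Fin n)) (i k : Fin n) (hik : i < k) (hw : w i < w k) :
    invLen w < invLen (w * Equiv.swap i k) := by
  classical
  set t := Equiv.swap i k with ht
  have hti : t i = k := Equiv.swap_apply_left i k
  have htk : t k = i := Equiv.swap_apply_right i k
  have hto : ∀ x : Fin n, x ≠ i → x ≠ k → t x = x := fun x => Equiv.swap_apply_of_ne_of_ne
  have happ : ∀ x, (w * t) x = w (t x) := fun x => rfl
  set φ : Fin n × Fin n → Fin n × Fin n :=
    fun p => if t p.1 < t p.2 then (t p.1, t p.2) else p with hφ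
  -- classification of "flipped" members of invSet w
  have hclass : ∀ p ∈ invSet w, ¬ t p.1 < t p.2 →
      (p.1 = i ∧ i < p.2 ∧ p.2 < k) ∨ (p.2 = k ∧ i < p.1 ∧ p.1 < k) := by
    intro p hp hflip
    rw [mem_invSet] at hp
    obtain ⟨hlt, hinv⟩ := hp
    by_cases h1 : p.1 = i
    · by_cases h2 : p.2 = k
      · exact absurd hinv (by rw [h1, h2]; exact not_lt.mpr hw.le)
      · have h2i : p.2 ≠ i := (h1 ▸ hlt).ne'
        have : t p.2 = p.2 := hto _ h2i h2
        have hk : ¬ k < p.2 := by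
          rw [h1, hti] at hflip; rw [this] at hflip; exact hflip
        left
        exact ⟨h1, h1 ▸ hlt, lt_of_le_of_ne (not_lt.mp hk) h2⟩
    · by_cases h1k : p.1 = k
      · exfalso
        have h2k : p.2 ≠ k := (h1k ▸ hlt).ne'
        have h2i : p.2 ≠ i := fun h => absurd (h ▸ h1k ▸ hlt) (not_lt.mpr (h ▸ hik.le))
        apply hflip
        rw [h1k, htk, hto _ h2i h2k]
        exact lt_trans hik (h1k ▸ hlt)
      · by_cases h2 : p.2 = k
        · right
          have hi : ¬ p.1 < i := by
            intro h
            apply hflip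
            rw [h2, htk, hto _ h.ne h1k]
            exact h
          exact ⟨h2, lt_of_le_of_ne (not_lt.mp hi) (Ne.symm h1), h2 ▸ hlt⟩
        · exfalso
          by_cases h2i : p.2 = i
          · exact hflip (by rw [h2i, hti, hto _ h1 h1k]; exact lt_trans (h2i ▸ hlt) hik)
          · exact hflip (by rw [hto _ h1 h1k, hto _ h2i h2]; exact hlt)
  have hmaps : ∀ p ∈ invSet w, φ p ∈ invSet (w * t) ∧ φ p ≠ (i, k) := by
    intro p hp
    have hp' := (mem_invSet w p).mp hp
    by_cases hflip : t p.1 < t p.2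
    · have hφp : φ p = (t p.1, t p.2) := if_pos hflip
      constructor
      · rw [hφp, mem_invSet]
        refine ⟨hflip, ?_⟩
        have htt : ∀ x, t (t x) = x := fun x => Equiv.swap_apply_self i k x
        rw [happ, happ, htt, htt]
        exact hp'.2
      · rw [hφp]
        intro h
        have h1 : t p.1 = i := congrArg Prod.fst h
        have h2 : t p.2 = k := congrArg Prod.snd h
        have e1 : p.1 = k := by have := congrArg t h1; rwa [Equiv.swap_apply_self, hti] at this
        have e2 : p.2 = i := by have := congrArg t h2; rwa [Equiv.swap_apply_self, htk] at this
        exact absurd (e1 ▸ e2 ▸ hp'.1) (not_lt.mpr hik.le)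
    · have hφp : φ p = p := if_neg hflip
      rcases hclass p hp hflip with ⟨h1, h2, h3⟩ | ⟨h1, h2, h3⟩
      · constructor
        · rw [hφp, mem_invSet]
          refine ⟨hp'.1, ?_⟩
          have e2 : t p.2 = p.2 := hto _ h2.ne' h3.ne
          rw [happ, happ, h1, hti, e2]
          exact lt_trans (h1 ▸ hp'.2) hw
        · rw [hφp]; intro h; exact absurd (congrArg Prod.snd h) h3.ne
      · constructor
        · rw [hφp, mem_invSet]
          refine ⟨hp'.1, ?_⟩
          have e1 : t p.1 = p.1 := hto _ h2.ne' h3.ne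
          rw [happ, happ, h1, htk, e1]
          exact lt_trans hw (h1 ▸ hp'.2)
        · rw [hφp]; intro h; exact absurd (congrArg Prod.fst h) h2.ne'
  have hinj : Set.InjOn φ (invSet w) := by
    intro p hp q hq hpq
    by_cases hp1 : t p.1 < t p.2 <;> by_cases hq1 : t q.1 < t q.2
    · rw [hφ] at hpq; simp only [if_pos hp1, if_pos hq1] at hpq
      have e1 := t.injective (congrArg Prod.fst hpq)
      have e2 := t.injective (congrArg Prod.snd hpq)
      exact Prod.ext e1 e2
    · exfalso
      rw [hφ] at hpq; simp only [if_pos hp1, if_neg hq1] at hpq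
      rcases hclass q hq hq1 with ⟨h1, h2, h3⟩ | ⟨h1, h2, h3⟩
      · -- q = (i, m), i < m < k ; t p.1 = i → p.1 = k → p.2 > k but t p.2 = q.2 < k
        have e1 : t p.1 = i := (congrArg Prod.fst hpq).trans h1
        have ep1 : p.1 = k := by have := congrArg t e1; rwa [Equiv.swap_apply_self, hti] at this
        have hp2 : k < p.2 := ep1 ▸ ((mem_invSet w p).mp hp).1
        have e2 : t p.2 = q.2 := congrArg Prod.snd hpq
        have : t p.2 = p.2 := hto _ (fun h => absurd (h ▸ hp2) (not_lt.mpr hik.le)) hp2.ne'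
        rw [this] at e2
        exact absurd (e2 ▸ hp2) (not_lt.mpr h3.le)
      · have e2 : t p.2 = k := (congrArg Prod.snd hpq).trans h1
        have ep2 : p.2 = i := by have := congrArg t e2; rwa [Equiv.swap_apply_self, htk] at this
        have hp1' : p.1 < i := ep2 ▸ ((mem_invSet w p).mp hp).1
        have e1 : t p.1 = q.1 := congrArg Prod.fst hpq
        have : t p.1 = p.1 := hto _ hp1'.ne (hp1'.trans hik).ne
        rw [this] at e1
        exact absurd (e1 ▸ hp1') (not_lt.mpr h2.le)
    · exfalso
      rw [hφ] at hpq; simp only [if_neg hp1, if_pos hq1] at hpq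
      rcases hclass p hp hp1 with ⟨h1, h2, h3⟩ | ⟨h1, h2, h3⟩
      · have e1 : t q.1 = i := (congrArg Prod.fst hpq).symm.trans h1
        have eq1 : q.1 = k := by have := congrArg t e1; rwa [Equiv.swap_apply_self, hti] at this
        have hq2 : k < q.2 := eq1 ▸ ((mem_invSet w q).mp hq).1
        have e2 : t q.2 = p.2 := (congrArg Prod.snd hpq).symm
        have : t q.2 = q.2 := hto _ (fun h => absurd (h ▸ hq2) (not_lt.mpr hik.le)) hq2.ne'
        rw [this] at e2
        exact absurd (e2 ▸ hq2) (not_lt.mpr h3.le)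
      · have e2 : t q.2 = k := (congrArg Prod.snd hpq).symm.trans h1
        have eq2 : q.2 = i := by have := congrArg t e2; rwa [Equiv.swap_apply_self, htk] at this
        have hq1' : q.1 < i := eq2 ▸ ((mem_invSet w q).mp hq).1
        have e1 : t q.1 = p.1 := (congrArg Prod.fst hpq).symm
        have : t q.1 = q.1 := hto _ hq1'.ne (hq1'.trans hik).ne
        rw [this] at e1
        exact absurd (e1 ▸ hq1') (not_lt.mpr h2.le)
    · rw [hφ] at hpq; simpa only [if_neg hp1, if_neg hq1] using hpq
  have hik_mem : (i, k) ∈ invSet (w * t) := by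
    rw [mem_invSet]
    exact ⟨hik, by rw [happ, happ, hti, htk]; exact hw⟩
  have hsub : (invSet w).image φ ⊆ (invSet (w * t)).erase (i, k) := by
    intro q hq
    rw [Finset.mem_image] at hq
    obtain ⟨p, hp, rfl⟩ := hq
    exact Finset.mem_erase.mpr ⟨(hmaps p hp).2, (hmaps p hp).1⟩
  calc invLen w = ((invSet w).image φ).card := by
        rw [invLen_eq, Finset.card_image_of_injOn hinj]
    _ ≤ ((invSet (w * t)).erase (i, k)).card := Finset.card_le_card hsub
    _ < (invSet (w * t)).card := Finset.card_erase_lt_of_mem hik_mem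
    _ = invLen (w * t) := rfl

lemma key_gt {n : ℕ} (w : Perm (Fin n)) (i k : Fin n) (hik : i < k) (hw : w k < w i) :
    invLen (w * Equiv.swap i k) < invLen w := by
  have h := key_lt (w * Equiv.swap i k) i k hik
    (by simp [Equiv.swap_apply_left, Equiv.swap_apply_right, Equiv.Perm.mul_apply]; exact hw)
  rwa [mul_assoc, Equiv.swap_mul_self, mul_one] at h


lemma strictMono_le_apply {n : ℕ} (f : Fin n → Fin n) (hf : StrictMono f) :
    ∀ a, a ≤ f a := by
  have H : ∀ m : ℕ, ∀ a : Fin n, a.val = m → a ≤ f a := by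
    intro m
    induction m using Nat.strong_induction_on with
    | _ m ih =>
      intro a ha
      by_contra hlt
      push_neg at hlt
      have hval : (f a).val < m := ha ▸ hlt
      have h1 : f a ≤ f (f a) := ih (f a).val hval (f a) rfl
      exact absurd (hf hlt) (not_lt.mpr h1)
  exact fun a => H a.val a rfl

lemma strictMono_perm_eq_one {n : ℕ} (f : Perm (Fin n)) (hf : StrictMono ⇑f) : f = 1 := by
  have hsymm : StrictMono ⇑f.symm := by
    intro a b hab
    rcases lt_trichotomy (f.symm a) (f.symm b) with h | h | h
    · exact h
    · exact absurd (by rw [← f.apply_symm_apply a, ← f.apply_symm_apply b, h]) hab.ne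
    · exact absurd (by simpa using hf h) (not_lt.mpr hab.le)
  have h1 := strictMono_le_apply _ hf
  have h2 := strictMono_le_apply _ hsymm
  ext a
  have := h2 (f a)
  simp only [Equiv.symm_apply_apply] at this
  exact le_antisymm this (h1 a) |>.symm ▸ rfl

end Aux1

/-- For distinct `u, v` with `ℓ(v) ≥ ℓ(u)` there is a transposition `t` with
`ℓ(vt) < ℓ(v)` and `ℓ(ut) > ℓ(u)`. -/
theorem stmt1 (n : ℕ) (u v : Perm (Fin n)) (hne : u ≠ v) (hlen : invLen u ≤ invLen v) :
    ∃ i j : Fin n, i ≠ j ∧ invLen (v * Equiv.swap i j) < invLen v ∧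
      invLen u < invLen (u * Equiv.swap i j) := by
  classical
  have main : ∃ i k : Fin n, i < k ∧ v k < v i ∧ u i < u k := by
    by_contra hc
    push_neg at hc
    -- every inversion of v is an inversion of u
    have hsub : (Finset.univ.filter fun p : Fin n × Fin n => p.1 < p.2 ∧ v p.2 < v p.1) ⊆
        (Finset.univ.filter fun p : Fin n × Fin n => p.1 < p.2 ∧ u p.2 < u p.1) := by
      intro p hp
      simp only [Finset.mem_filter, Finset.mem_univ, true_and] at hp ⊢
      refine ⟨hp.1, ?_⟩
      have h := hc p.1 p.2 hp.1 hp.2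
      have hne' : u p.2 ≠ u p.1 := fun h' => absurd (u.injective h') hp.1.ne'
      exact lt_of_le_of_ne h hne'
    have hcard : invLen v ≤ invLen u := Finset.card_le_card hsub
    have heq : (Finset.univ.filter fun p : Fin n × Fin n => p.1 < p.2 ∧ v p.2 < v p.1) =
        (Finset.univ.filter fun p : Fin n × Fin n => p.1 < p.2 ∧ u p.2 < u p.1) :=
      Finset.eq_of_subset_of_card_le hsub (by exact hlen)
    -- same inversion sets ⇒ u = v
    have hiff : ∀ p q : Fin n, p < q → (v q < v p ↔ u q < u p) := by
      intro p q hpq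
      constructor
      · intro h
        have : (p, q) ∈ (Finset.univ.filter fun r : Fin n × Fin n => r.1 < r.2 ∧ u r.2 < u r.1) := by
          rw [← heq]; simp [hpq, h]
        simpa [hpq] using this
      · intro h
        have : (p, q) ∈ (Finset.univ.filter fun r : Fin n × Fin n => r.1 < r.2 ∧ v r.2 < v r.1) := by
          rw [heq]; simp [hpq, h]
        simpa [hpq] using this
    have hmono : StrictMono ⇑(v * u⁻¹) := by
      intro a b hab
      simp only [Equiv.Perm.mul_apply]
      set p := u⁻¹ a with hp
      set q := u⁻¹ b with hq
      have hup : u p = a := u.apply_symm_apply a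
      have huq : u q = b := u.apply_symm_apply b
      have hpq : p ≠ q := fun h => absurd (hup ▸ huq ▸ h ▸ rfl) hab.ne
      rcases lt_trichotomy p q with h | h | h
      · have : ¬ v q < v p := fun hv => absurd ((hiff p q h).mp hv) (by rw [hup, huq]; exact not_lt.mpr hab.le)
        have hvne : v p ≠ v q := fun h' => hpq (v.injective h')
        exact lt_of_le_of_ne (not_lt.mp this) hvne
      · exact absurd h hpq
      · exact (hiff q p h).mpr (by rw [hup, huq]; exact hab)
    have := Aux1.strictMono_perm_eq_one _ hmono
    have : v = u := by
      have h1 : v * u⁻¹ = 1 := this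
      group at h1 ⊢
      exact (mul_inv_eq_one.mp h1)
    exact hne this.symm
  obtain ⟨i, k, hik, hv, hu⟩ := main
  exact ⟨i, k, hik.ne, Aux1.key_gt v i k hik hv, Aux1.key_lt u i k hik hu⟩
end

section
/- Let u, v ∈ S_n be distinct with ℓ(v) ≥ ℓ(u). Then there exists a pair i < k which is inversion-minimal on (u,v): that is, v(i) > v(k) and u(i) < u(k), and no proper subinterval [p,q] ⊊ [i,k] satisfies v(p) > v(q) and u(p) < u(q). -/
open Equiv

/-- For distinct `u, v` with `ℓ(v) ≥ ℓ(u)` there is an inversion-minimal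
transposition on `(u,v)`. -/
theorem stmt2 (n : ℕ) (u v : Perm (Fin n)) (hne : u ≠ v) (hlen : invLen u ≤ invLen v) :
    ∃ i k : Fin n, InvMinimal u v i k := by
  -- first: existence of some pair
  have hex : ∃ p : Fin n × Fin n, p.1 < p.2 ∧ v p.2 < v p.1 ∧ u p.1 < u p.2 := by
    by_contra hno
    push_neg at hno
    -- inversions of v ⊆ inversions of u
    have hsub : (Finset.univ.filter fun p : Fin n × Fin n => p.1 < p.2 ∧ v p.2 < v p.1) ⊆
        (Finset.univ.filter fun p : Fin n × Fin n => p.1 < p.2 ∧ u p.2 < u p.1) := by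
      intro p hp
      simp only [Finset.mem_filter, Finset.mem_univ, true_and] at hp ⊢
      refine ⟨hp.1, ?_⟩
      have := hno p hp.1 hp.2
      have hne' : u p.1 ≠ u p.2 := fun h => (ne_of_lt hp.1) (u.injective h)
      omega
    have hcard : invLen v ≤ invLen u := Finset.card_le_card hsub
    have heq : (Finset.univ.filter fun p : Fin n × Fin n => p.1 < p.2 ∧ v p.2 < v p.1) =
        (Finset.univ.filter fun p : Fin n × Fin n => p.1 < p.2 ∧ u p.2 < u p.1) :=
      Finset.eq_of_subset_of_card_le hsub hlen
    -- hence for p < q : v q < v p ↔ u q < u p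
    have hiff : ∀ p q : Fin n, p < q → (v q < v p ↔ u q < u p) := by
      intro p q hpq
      have := Finset.ext_iff.mp heq (p, q)
      simpa [Finset.mem_filter, hpq] using this
    -- so v p < v q → u p < u q for all p q
    have hmono : ∀ p q : Fin n, v p < v q → u p < u q := by
      intro p q h
      rcases lt_trichotomy p q with hlt | rfl | hgt
      · have h1 := hiff p q hlt
        have hvne : ¬ v q < v p := not_lt_of_gt h
        have : ¬ u q < u p := fun hu => hvne (h1.mpr hu)
        have hne' : u p ≠ u q := fun he => (ne_of_lt hlt) (u.injective he)
        omega
      · exact absurd h (lt_irrefl _)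
      · exact (hiff q p hgt).mp h
    have hsm : StrictMono (fun i => u (v.symm i)) := by
      intro a b hab
      exact hmono _ _ (by simpa using hab)
    haveI : WellFoundedLT (Fin n) := inferInstance
    have hid : (fun i => u (v.symm i)) = id := by
      apply (hsm.range_inj strictMono_id).mp
      rw [Set.range_id]
      exact Set.range_eq_univ.mpr fun y => ⟨v (u.symm y), by simp⟩
    apply hne
    ext i
    have h5 := congrFun hid (v i)
    have h6 : u i = v i := by simpa using h5
    exact congrArg Fin.val h6
  -- now pick a minimal-width pair
  classical
  let S := Finset.univ.filter fun p : Fin n × Fin n => p.1 < p.2 ∧ v p.2 < v p.1 ∧ u p.1 < u p.2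
  have hS : S.Nonempty := by
    obtain ⟨p, hp⟩ := hex
    exact ⟨p, by simp [S, hp.1, hp.2.1, hp.2.2]⟩
  obtain ⟨m, hmS, hmin⟩ := S.exists_min_image (fun p => (p.2 : ℕ) - (p.1 : ℕ)) hS
  simp only [S, Finset.mem_filter, Finset.mem_univ, true_and] at hmS
  refine ⟨m.1, m.2, hmS.1, hmS.2.1, hmS.2.2, ?_⟩
  intro p q hip hpq hqk hne' ⟨hv, hu⟩
  have hmem : (p, q) ∈ S := by simp [S, hpq, hv, hu]
  have := hmin (p, q) hmem
  simp only at this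
  have h1 : (m.1 : ℕ) ≤ (p : ℕ) := hip
  have h2 : (q : ℕ) ≤ (m.2 : ℕ) := hqk
  have h3 : (p : ℕ) < (q : ℕ) := hpq
  have h4 : (m.1 : ℕ) < (m.2 : ℕ) := hmS.1
  -- not (p = i ∧ q = k) means strict subinterval
  have : (p : ℕ) = (m.1 : ℕ) ∧ (q : ℕ) = (m.2 : ℕ) := by omega
  exact hne' ⟨Fin.ext this.1, Fin.ext this.2⟩
end

section
/- Let u, v ∈ S_n and suppose (i k) is inversion-minimal on (u,v). Then for every j with i < j < k, the four conditions u(j) > u(i), u(j) > u(k), v(j) > v(k), and v(j) > v(i) are all equivalent. -/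
open Equiv

/-- If `(i k)` is inversion-minimal on `(u,v)` then for every `i < j < k` the four
conditions `u j > u i`, `u j > u k`, `v j > v k`, `v j > v i` are equivalent. -/
theorem stmt4 (n : ℕ) (u v : Perm (Fin n)) (i k : Fin n) (h : InvMinimal u v i k)
    (j : Fin n) (hij : i < j) (hjk : j < k) :
    (u i < u j ↔ u k < u j) ∧ (u k < u j ↔ v k < v j) ∧ (v k < v j ↔ v i < v j) := by
  obtain ⟨hik, hvki, huik, hmin⟩ := h
  have h1 : ¬(v j < v i ∧ u i < u j) :=
    hmin i j le_rfl hij hjk.le (by rintro ⟨-, rfl⟩; exact lt_irrefl j hjk)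
  have h2 : ¬(v k < v j ∧ u j < u k) :=
    hmin j k hij.le hjk le_rfl (by rintro ⟨rfl, -⟩; exact lt_irrefl j hij)
  have hAD : u i < u j → v i < v j := fun hA =>
    lt_of_le_of_ne (le_of_not_gt fun hd => h1 ⟨hd, hA⟩)
      (fun e => (ne_of_lt hij) (v.injective e))
  have hCB : v k < v j → u k < u j := fun hC =>
    lt_of_le_of_ne (le_of_not_gt fun hb => h2 ⟨hC, hb⟩)
      (fun e => (ne_of_lt hjk) (u.injective e.symm))
  have hBA : u k < u j → u i < u j := fun hB => huik.trans hB
  have hDC : v i < v j → v k < v j := fun hD => hvki.trans hD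
  exact ⟨⟨fun hA => hCB (hDC (hAD hA)), hBA⟩,
    ⟨fun hB => hDC (hAD (hBA hB)), hCB⟩,
    ⟨fun hC => hAD (hBA (hCB hC)), hDC⟩⟩
end

section
/- Let u, v ∈ S_n and let (i k) be inversion-minimal on (u,v). Then multiplying v on the right by (i k) gives a cocover of v and multiplying u on the right by (i k) gives a cover of u: ℓ(v·(ik)) = ℓ(v) − 1 and ℓ(u·(ik)) = ℓ(u) + 1. -/
open Equiv

lemma swap_adj_lt {n : ℕ} {i j p q : Fin n} (hij : (i:ℕ)+1 = j) (hpq : p < q)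
    (hne : ¬(p = i ∧ q = j)) : Equiv.swap i j p < Equiv.swap i j q := by
  have hne' : (p:ℕ) ≠ i ∨ (q:ℕ) ≠ j := by
    by_contra hc; push_neg at hc; exact hne ⟨Fin.ext hc.1, Fin.ext hc.2⟩
  have hpq' : (p:ℕ) < q := hpq
  simp only [Equiv.swap_apply_def]
  split_ifs <;> simp only [Fin.lt_def, Fin.ext_iff, not_and] at * <;> omega

lemma invLen_adj {n : ℕ} (z : Perm (Fin n)) (i j : Fin n) (hij : (i:ℕ)+1 = j)
    (hz : z i < z j) : invLen (z * Equiv.swap i j) = invLen z + 1 := by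
  classical
  set s := Equiv.swap i j with hs
  have hss : ∀ x, s (s x) = x := fun x => Equiv.swap_apply_self i j x
  unfold invLen
  set A := Finset.univ.filter (fun p : Fin n × Fin n => p.1 < p.2 ∧ z p.2 < z p.1) with hA
  have hset : (Finset.univ.filter fun p : Fin n × Fin n =>
      p.1 < p.2 ∧ (z * s) p.2 < (z * s) p.1) = insert (i, j) (A.image (Prod.map s s)) := by
    ext ⟨p, q⟩
    rw [Finset.mem_filter]
    simp only [Finset.mem_filter, Finset.mem_univ, true_and, Finset.mem_insert,
      Finset.mem_image, Prod.mk.injEq, Prod.map, Prod.exists, hA, Perm.mul_apply]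
    constructor
    · rintro ⟨hpq, hzz⟩
      by_cases hpq' : p = i ∧ q = j
      · exact Or.inl ⟨hpq'.1, hpq'.2⟩
      · exact Or.inr ⟨s p, s q, ⟨swap_adj_lt hij hpq hpq',
          hzz⟩, hss p, hss q⟩
    · rintro (⟨rfl, rfl⟩ | ⟨a, b, ⟨hab, hzab⟩, rfl, rfl⟩)
      · refine ⟨Fin.lt_def.mpr (by omega), ?_⟩
        rw [hs, Equiv.swap_apply_left, Equiv.swap_apply_right]
        exact hz
      · have habne : ¬(a = i ∧ b = j) := by
          rintro ⟨rfl, rfl⟩; exact absurd hzab (not_lt.mpr hz.le)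
        exact ⟨swap_adj_lt hij hab habne, by rwa [hss, hss]⟩
  rw [hset, Finset.card_insert_of_notMem, Finset.card_image_of_injective _
    ((Equiv.injective s).prodMap (Equiv.injective s))]
  intro hmem
  simp only [Finset.mem_image, Prod.map, Prod.mk.injEq, Prod.exists, hA,
    Finset.mem_filter, Finset.mem_univ, true_and] at hmem
  obtain ⟨a, b, ⟨hab, -⟩, ha, hb⟩ := hmem
  have : a = s i := by rw [← ha, hss]
  have hb' : b = s j := by rw [← hb, hss]
  rw [hs, Equiv.swap_apply_left] at this
  rw [hs, Equiv.swap_apply_right] at hb'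
  subst this; subst hb'
  exact absurd hab (by rw [Fin.lt_def]; omega)

lemma invLen_adj' {n : ℕ} (z : Perm (Fin n)) (i j : Fin n) (hij : (i:ℕ)+1 = j)
    (hz : z j < z i) : invLen z = invLen (z * Equiv.swap i j) + 1 := by
  have h1 : (z * Equiv.swap i j) i < (z * Equiv.swap i j) j := by
    simp only [Perm.mul_apply, Equiv.swap_apply_left, Equiv.swap_apply_right]
    exact hz
  have := invLen_adj (z * Equiv.swap i j) i j hij h1
  rwa [mul_assoc, Equiv.swap_mul_self, mul_one] at this

lemma key {n : ℕ} : ∀ m (z : Perm (Fin n)) (i k : Fin n), (k:ℕ) - i = m → i < k →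
    z i < z k → (∀ j, i < j → j < k → ¬(z i < z j ∧ z j < z k)) →
    invLen (z * Equiv.swap i k) = invLen z + 1 := by
  intro m
  induction m using Nat.strong_induction_on with
  | _ m ih =>
    intro z i k hm hik hz hmid
    have hik' : (i:ℕ) < k := hik
    by_cases hadj : (i:ℕ)+1 = k
    · exact invLen_adj z i k hadj hz
    · have hk1 : (i:ℕ)+1 < k := by omega
      set j : Fin n := ⟨(i:ℕ)+1, by omega⟩ with hj
      have hij : (i:ℕ)+1 = j := rfl
      have hjk : j < k := by rw [Fin.lt_def]; exact hk1
      have hjlt : i < j := by rw [Fin.lt_def]; omega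
      have hjnei : j ≠ i := (Fin.ne_of_lt hjlt).symm
      have hjnek : j ≠ k := Fin.ne_of_lt hjk
      have hine : i ≠ k := Fin.ne_of_lt hik
      -- decomposition: swap i j * swap j k * swap i j = swap i k
      have hdec : Equiv.swap i j * Equiv.swap j k * Equiv.swap i j = Equiv.swap i k := by
        have := Equiv.swap_mul_swap_mul_swap (x := k) (y := j) (z := i)
          hjnek.symm hine.symm
        rwa [Equiv.swap_comm j i, Equiv.swap_comm k j] at this
      have hzmul : z * Equiv.swap i k =
          ((z * Equiv.swap i j) * Equiv.swap j k) * Equiv.swap i j := by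
        rw [mul_assoc, mul_assoc, ← mul_assoc (Equiv.swap i j), hdec]
      set z1 := z * Equiv.swap i j with hz1
      have hz1i : z1 i = z j := by simp [hz1, Perm.mul_apply]
      have hz1j : z1 j = z i := by simp [hz1, Perm.mul_apply]
      have hz1k : z1 k = z k := by
        simp [hz1, Perm.mul_apply, Equiv.swap_apply_of_ne_of_ne hine.symm hjnek.symm]
      have hmid1 : ∀ l, j < l → l < k → ¬(z1 j < z1 l ∧ z1 l < z1 k) := by
        intro l hjl hlk
        have hlni : l ≠ i := by
          intro he; subst he; exact absurd (hjlt.trans hjl) (lt_irrefl _)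
        have hlnj : l ≠ j := Fin.ne_of_gt hjl
        have hz1l : z1 l = z l := by
          simp [hz1, Perm.mul_apply, Equiv.swap_apply_of_ne_of_ne hlni hlnj]
        rw [hz1j, hz1k, hz1l]
        exact hmid l (hjlt.trans hjl) hlk
      have hsub : (k:ℕ) - j = m - 1 := by simp only [hj]; omega
      have hz1jk : z1 j < z1 k := by rw [hz1j, hz1k]; exact hz
      have hstep2 := ih (m - 1) (by omega) z1 j k hsub hjk hz1jk hmid1
      set z2 := z1 * Equiv.swap j k with hz2
      have hz2i : z2 i = z j := by
        simp [hz2, Perm.mul_apply, Equiv.swap_apply_of_ne_of_ne hjnei.symm hine]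
        exact hz1i
      have hz2j : z2 j = z k := by
        simp only [hz2, Perm.mul_apply, Equiv.swap_apply_left]; exact hz1k
      rw [hzmul]
      rcases lt_or_gt_of_ne (fun he => hjnei (z.injective he) : z j ≠ z i) with hji | hji
      · -- z j < z i : first step decreases, last increases
        have h1 : invLen z = invLen z1 + 1 := invLen_adj' z i j hij hji
        have h3 : invLen (z2 * Equiv.swap i j) = invLen z2 + 1 := by
          apply invLen_adj z2 i j hij
          rw [hz2i, hz2j]; exact hji.trans hz
        omega
      · -- z i < z j : then z k < z j, first increases, last decreases
        have hjk' : z k < z j := by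
          rcases lt_or_gt_of_ne (fun he => hjnek (z.injective he) : z j ≠ z k) with h | h
          · exact absurd ⟨hji, h⟩ (hmid j hjlt hjk)
          · exact h
        have h1 : invLen z1 = invLen z + 1 := invLen_adj z i j hij hji
        have h3 : invLen z2 = invLen (z2 * Equiv.swap i j) + 1 := by
          apply invLen_adj' z2 i j hij
          rw [hz2i, hz2j]; exact hjk'
        omega

/-- If `(i k)` is inversion-minimal on `(u,v)` then `ℓ(v·(ik)) = ℓ(v) - 1` and
`ℓ(u·(ik)) = ℓ(u) + 1`. -/
theorem stmt5 (n : ℕ) (u v : Perm (Fin n)) (i k : Fin n) (h : InvMinimal u v i k) :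
    invLen (v * Equiv.swap i k) + 1 = invLen v ∧
      invLen (u * Equiv.swap i k) = invLen u + 1 := by
  obtain ⟨hik, hvk, huk, hmin⟩ := h
  have hmidu : ∀ j, i < j → j < k → ¬(u i < u j ∧ u j < u k) := by
    rintro j hij hjk ⟨h1, h2⟩
    rcases lt_or_gt_of_ne (fun he => (Fin.ne_of_lt hij).symm (v.injective he) : v j ≠ v i)
      with hv | hv
    · exact hmin i j le_rfl hij hjk.le
        (by rintro ⟨-, rfl⟩; exact absurd hjk (lt_irrefl _)) ⟨hv, h1⟩
    · exact hmin j k hij.le hjk le_rfl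
        (by rintro ⟨rfl, -⟩; exact absurd hij (lt_irrefl _)) ⟨hvk.trans hv, h2⟩
  have hmidv : ∀ j, i < j → j < k → ¬(v k < v j ∧ v j < v i) := by
    rintro j hij hjk ⟨h1, h2⟩
    rcases lt_or_gt_of_ne (fun he => (Fin.ne_of_lt hij).symm (u.injective he) : u j ≠ u i)
      with hu | hu
    · exact hmin j k hij.le hjk le_rfl
        (by rintro ⟨rfl, -⟩; exact absurd hij (lt_irrefl _)) ⟨h1, hu.trans huk⟩
    · exact hmin i j le_rfl hij hjk.le
        (by rintro ⟨-, rfl⟩; exact absurd hjk (lt_irrefl _)) ⟨h2, hu⟩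
  constructor
  · set v' := v * Equiv.swap i k with hv'
    have hine : i ≠ k := Fin.ne_of_lt hik
    have hv'i : v' i = v k := by simp [hv', Perm.mul_apply]
    have hv'k : v' k = v i := by simp [hv', Perm.mul_apply]
    have hmid' : ∀ j, i < j → j < k → ¬(v' i < v' j ∧ v' j < v' k) := by
      intro j hij hjk
      have hjni : j ≠ i := (Fin.ne_of_lt hij).symm
      have hjnk : j ≠ k := Fin.ne_of_lt hjk
      have : v' j = v j := by
        simp [hv', Perm.mul_apply, Equiv.swap_apply_of_ne_of_ne hjni hjnk]
      rw [hv'i, hv'k, this]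
      exact hmidv j hij hjk
    have := key ((k:ℕ) - i) v' i k rfl hik (by rw [hv'i, hv'k]; exact hvk) hmid'
    rw [hv', mul_assoc, Equiv.swap_mul_self, mul_one] at this
    rw [← hv'] at this
    omega
  · exact key ((k:ℕ) - i) u i k rfl hik huk hmidu
end

section
/- (Generalized lifting property) Let u < v in Bruhat order on S_n, and let (i k) be an inversion-minimal transposition on (u,v). Then u ≤ v·(ik) ⋖ v and u ⋖ u·(ik) ≤ v in Bruhat order. -/
open Equiv

namespace Lift

open Finset

variable {n : ℕ}

lemma flip_iff {p q c d : Fin n} (hpq : p < q) (hcd : c < d) :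
    swap p q d < swap p q c ↔ (p ≤ c ∧ d ≤ q ∧ (c = p ∨ d = q)) := by
  obtain hc | hc := eq_or_ne c p <;> obtain hd | hd := eq_or_ne d q
  · subst hc; subst hd
    rw [swap_apply_left, swap_apply_right]
    simp [hpq, le_refl]
  · subst hc
    rw [swap_apply_left, swap_apply_of_ne_of_ne (ne_of_gt hcd) hd]
    constructor
    · intro h'; exact ⟨le_refl _, le_of_lt h', Or.inl rfl⟩
    · rintro ⟨-, h2, -⟩; exact lt_of_le_of_ne h2 hd
  · subst hd
    have hcq : c ≠ d := ne_of_lt hcd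
    rw [swap_apply_right, swap_apply_of_ne_of_ne hc hcq]
    constructor
    · intro h'; exact ⟨le_of_lt h', le_refl _, Or.inr rfl⟩
    · rintro ⟨h1, -, -⟩; exact lt_of_le_of_ne h1 (Ne.symm hc)
  · obtain hcq | hcq := eq_or_ne c q
    · subst hcq
      rw [swap_apply_right, swap_apply_of_ne_of_ne (ne_of_gt (hpq.trans hcd)) hd]
      exact iff_of_false (fun h' => absurd (h'.trans hpq) (not_lt.mpr hcd.le))
        (fun h' => absurd (lt_of_lt_of_le hcd h'.2.1) (lt_irrefl _))
    · obtain hdp | hdp := eq_or_ne d p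
      · subst hdp
        rw [swap_apply_left, swap_apply_of_ne_of_ne hc hcq]
        exact iff_of_false (fun h' => absurd (hcd.trans (hpq.trans h')) (lt_irrefl _))
          (fun h' => absurd (lt_of_le_of_lt h'.1 hcd) (lt_irrefl _))
      · rw [swap_apply_of_ne_of_ne hc hcq, swap_apply_of_ne_of_ne hdp hd]
        exact iff_of_false (asymm hcd) (fun h' => by rcases h'.2.2 with h | h
                                                     exacts [hc h, hd h])

/-- descending flipped pairs -/
def Xset (z : Perm (Fin n)) (p q : Fin n) : Finset (Fin n × Fin n) :=
  Finset.univ.filter fun x => x.1 < x.2 ∧ swap p q x.2 < swap p q x.1 ∧ z x.2 < z x.1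

/-- ascending flipped pairs -/
def Yset (z : Perm (Fin n)) (p q : Fin n) : Finset (Fin n × Fin n) :=
  Finset.univ.filter fun x => x.1 < x.2 ∧ swap p q x.2 < swap p q x.1 ∧ z x.1 < z x.2

lemma invLen_decomp (z : Perm (Fin n)) (p q : Fin n) :
    invLen (z * swap p q) + (Xset z p q).card = invLen z + (Yset z p q).card := by
  classical
  set s := swap p q with hs
  have h1 := Finset.card_filter_add_card_filter_not
    (s := Finset.univ.filter fun x : Fin n × Fin n => x.1 < x.2 ∧ (z * s) x.2 < (z * s) x.1)
    (p := fun x : Fin n × Fin n => s x.1 < s x.2)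
  rw [Finset.filter_filter, Finset.filter_filter] at h1
  have h2 := Finset.card_filter_add_card_filter_not
    (s := Finset.univ.filter fun x : Fin n × Fin n => x.1 < x.2 ∧ z x.2 < z x.1)
    (p := fun x : Fin n × Fin n => s x.1 < s x.2)
  rw [Finset.filter_filter, Finset.filter_filter] at h2
  have e1 : (Finset.univ.filter fun x : Fin n × Fin n =>
        (x.1 < x.2 ∧ (z * s) x.2 < (z * s) x.1) ∧ s x.1 < s x.2).card =
      (Finset.univ.filter fun x : Fin n × Fin n =>
        (x.1 < x.2 ∧ z x.2 < z x.1) ∧ s x.1 < s x.2).card := by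
    apply Finset.card_nbij' (fun x => (s x.1, s x.2)) (fun x => (s x.1, s x.2))
    · intro a ha
      rw [Finset.mem_coe, Finset.mem_filter] at ha ⊢
      simp only [Finset.mem_filter, Finset.mem_univ, true_and, Perm.mul_apply] at ha ⊢
      obtain ⟨⟨h1', h2'⟩, h3'⟩ := ha
      refine ⟨⟨h3', h2'⟩, ?_⟩
      simpa [hs, swap_apply_self] using h1'
    · intro a ha
      rw [Finset.mem_coe, Finset.mem_filter] at ha ⊢
      simp only [Finset.mem_filter, Finset.mem_univ, true_and, Perm.mul_apply] at ha ⊢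
      obtain ⟨⟨h1', h2'⟩, h3'⟩ := ha
      constructor
      · refine ⟨h3', ?_⟩
        simpa [hs, swap_apply_self] using h2'
      · simpa [hs, swap_apply_self] using h1'
    · intro a _; simp [hs, swap_apply_self]
    · intro a _; simp [hs, swap_apply_self]
  have e2 : (Finset.univ.filter fun x : Fin n × Fin n =>
        (x.1 < x.2 ∧ (z * s) x.2 < (z * s) x.1) ∧ ¬ s x.1 < s x.2).card = (Yset z p q).card := by
    apply Finset.card_nbij' (fun x => (s x.2, s x.1)) (fun x => (s x.2, s x.1))
    · intro a ha
      rw [Finset.mem_coe, Finset.mem_filter] at ha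
      simp only [Finset.mem_filter, Finset.mem_univ, true_and, Perm.mul_apply] at ha
      obtain ⟨⟨h1', h2'⟩, h3'⟩ := ha
      have hne : s a.2 ≠ s a.1 := fun hh => (ne_of_lt h1') (s.injective hh).symm
      have h4' : s a.2 < s a.1 := lt_of_le_of_ne (not_lt.mp h3') hne
      simp only [Finset.mem_coe, Yset, Finset.mem_filter, Finset.mem_univ, true_and, hs]
      rw [← hs]
      refine ⟨h4', ?_, h2'⟩
      simpa [hs, swap_apply_self] using h1'
    · intro a ha
      simp only [Finset.mem_coe, Yset, Finset.mem_filter, Finset.mem_univ, true_and, ← hs] at ha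
      obtain ⟨h1', h2', h3'⟩ := ha
      rw [Finset.mem_coe, Finset.mem_filter]
      simp only [Finset.mem_filter, Finset.mem_univ, true_and, Perm.mul_apply]
      refine ⟨⟨h2', ?_⟩, ?_⟩
      · simpa [hs, swap_apply_self] using h3'
      · simp only [hs, swap_apply_self]
        exact not_lt.mpr (le_of_lt h1')
    · intro a _; simp [hs, swap_apply_self]
    · intro a _; simp [hs, swap_apply_self]
  have e3 : (Finset.univ.filter fun x : Fin n × Fin n =>
        (x.1 < x.2 ∧ z x.2 < z x.1) ∧ ¬ s x.1 < s x.2).card = (Xset z p q).card := by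
    congr 1
    apply Finset.filter_congr
    intro x _
    simp only [Xset, ← hs]
    constructor
    · rintro ⟨⟨h1', h2'⟩, h3'⟩
      have hne : s x.2 ≠ s x.1 := fun hh => (ne_of_lt h1') (s.injective hh).symm
      exact ⟨h1', lt_of_le_of_ne (not_lt.mp h3') hne, h2'⟩
    · rintro ⟨h1', h2', h3'⟩
      exact ⟨⟨h1', h3'⟩, not_lt.mpr (le_of_lt h2')⟩
  have hzs : invLen (z * s) = _ + _ := h1.symm
  have hz : invLen z = _ + _ := h2.symm
  rw [hzs, e1, e2, hz, e3]
  omega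


lemma mem_Xset {z : Perm (Fin n)} {p q : Fin n} {x : Fin n × Fin n} (hpq : p < q) :
    x ∈ Xset z p q ↔
      x.1 < x.2 ∧ (p ≤ x.1 ∧ x.2 ≤ q ∧ (x.1 = p ∨ x.2 = q)) ∧ z x.2 < z x.1 := by
  simp only [Xset, mem_filter, mem_univ, true_and]
  constructor
  · rintro ⟨h1, h2, h3⟩; exact ⟨h1, (flip_iff hpq h1).1 h2, h3⟩
  · rintro ⟨h1, h2, h3⟩; exact ⟨h1, (flip_iff hpq h1).2 h2, h3⟩

lemma mem_Yset {z : Perm (Fin n)} {p q : Fin n} {x : Fin n × Fin n} (hpq : p < q) :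
    x ∈ Yset z p q ↔
      x.1 < x.2 ∧ (p ≤ x.1 ∧ x.2 ≤ q ∧ (x.1 = p ∨ x.2 = q)) ∧ z x.1 < z x.2 := by
  simp only [Yset, mem_filter, mem_univ, true_and]
  constructor
  · rintro ⟨h1, h2, h3⟩; exact ⟨h1, (flip_iff hpq h1).1 h2, h3⟩
  · rintro ⟨h1, h2, h3⟩; exact ⟨h1, (flip_iff hpq h1).2 h2, h3⟩

/-- the partner map between descending and ascending flipped pairs -/
def psi (p q : Fin n) (x : Fin n × Fin n) : Fin n × Fin n :=
  if x.1 = p then (x.2, q) else (p, x.1)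

lemma pq_mem_Yset {z : Perm (Fin n)} {p q : Fin n} (hpq : p < q) (hz : z p < z q) :
    (p, q) ∈ Yset z p q :=
  (mem_Yset hpq).2 ⟨hpq, ⟨le_refl _, le_refl _, Or.inl rfl⟩, hz⟩

lemma psi_maps {z : Perm (Fin n)} {p q : Fin n} (hpq : p < q) (hz : z p < z q) :
    ∀ x ∈ Xset z p q, psi p q x ∈ (Yset z p q).erase (p, q) := by
  intro x hx
  rw [mem_Xset hpq] at hx
  obtain ⟨h1, ⟨h2, h3, h4⟩, h5⟩ := hx
  rw [Finset.mem_erase]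
  by_cases hc : x.1 = p
  · have hd : x.2 ≠ q := fun hh => absurd (hh ▸ hc ▸ h5) (asymm hz)
    have hdq : x.2 < q := lt_of_le_of_ne h3 hd
    rw [psi, if_pos hc]
    constructor
    · intro hcon
      have : x.2 = p := congrArg Prod.fst hcon
      exact absurd (this ▸ (hc ▸ h1)) (lt_irrefl _)
    · exact (mem_Yset hpq).2 ⟨hdq, ⟨le_of_lt (hc ▸ h1), le_refl _, Or.inr rfl⟩,
        lt_trans (hc ▸ h5) hz⟩
  · have h4' : x.2 = q := h4.resolve_left hc
    have hp1 : p < x.1 := lt_of_le_of_ne h2 (Ne.symm hc)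
    rw [psi, if_neg hc]
    constructor
    · intro hcon
      exact absurd (congrArg Prod.snd hcon) (ne_of_lt (h4' ▸ h1))
    · exact (mem_Yset hpq).2 ⟨hp1, ⟨le_refl _, le_of_lt (h4' ▸ h1), Or.inl rfl⟩,
        lt_trans hz (h4' ▸ h5)⟩

lemma psi_inj {z : Perm (Fin n)} {p q : Fin n} (hpq : p < q) :
    Set.InjOn (psi p q) (Xset z p q) := by
  intro x hx y hy hxy
  rw [Finset.mem_coe, mem_Xset hpq] at hx hy
  obtain ⟨hx1, ⟨hx2, hx3, hx4⟩, hx5⟩ := hx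
  obtain ⟨hy1, ⟨hy2, hy3, hy4⟩, hy5⟩ := hy
  by_cases hcx : x.1 = p <;> by_cases hcy : y.1 = p
  · simp only [psi, hcx, hcy, if_true, Prod.mk.injEq] at hxy
    exact Prod.ext (hcy ▸ hcx) hxy.1
  · simp only [psi, hcx, if_true, hcy, if_false, Prod.mk.injEq] at hxy
    exact absurd (hxy.1 ▸ (hcx ▸ hx1)) (lt_irrefl _)
  · simp only [psi, hcx, if_false, hcy, if_true, Prod.mk.injEq] at hxy
    exact absurd (hxy.1.symm ▸ (hcy ▸ hy1)) (lt_irrefl _)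
  · simp only [psi, hcx, hcy, if_false, Prod.mk.injEq] at hxy
    have h2q : x.2 = y.2 := by
      rw [hx4.resolve_left hcx, hy4.resolve_left hcy]
    exact Prod.ext hxy.2 h2q

lemma psi_surj {z : Perm (Fin n)} {p q : Fin n} (hpq : p < q) (hz : z p < z q)
    (hni : ∀ a : Fin n, p < a → a < q → z a < z p ∨ z q < z a) :
    ∀ y ∈ (Yset z p q).erase (p, q), ∃ x ∈ Xset z p q, psi p q x = y := by
  intro y hy
  rw [Finset.mem_erase, mem_Yset hpq] at hy
  obtain ⟨hne, hy1, ⟨hy2, hy3, hy4⟩, hy5⟩ := hy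
  by_cases hc : y.1 = p
  · have hd : y.2 ≠ q := fun hh => hne (Prod.ext hc hh)
    have hdq : y.2 < q := lt_of_le_of_ne hy3 hd
    have hzd : z q < z y.2 := by
      rcases hni y.2 (hc ▸ hy1) hdq with h | h
      · exact absurd (hc ▸ hy5) (asymm h)
      · exact h
    refine ⟨(y.2, q), (mem_Xset hpq).2 ⟨hdq, ⟨le_of_lt (hc ▸ hy1), le_refl _, Or.inr rfl⟩, hzd⟩, ?_⟩
    rw [psi, if_neg (ne_of_gt (hc ▸ hy1))]
    exact Prod.ext hc.symm rfl
  · have hq : y.2 = q := hy4.resolve_left hc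
    have hp1 : p < y.1 := lt_of_le_of_ne hy2 (Ne.symm hc)
    have hzd : z y.1 < z p := by
      rcases hni y.1 hp1 (hq ▸ hy1) with h | h
      · exact h
      · exact absurd (hq ▸ hy5) (asymm h)
    refine ⟨(p, y.1), (mem_Xset hpq).2 ⟨hp1, ⟨le_refl _, le_of_lt (hq ▸ hy1), Or.inl rfl⟩, hzd⟩, ?_⟩
    rw [psi, if_pos rfl]
    exact Prod.ext rfl hq.symm

lemma card_X_lt_card_Y {z : Perm (Fin n)} {p q : Fin n} (hpq : p < q) (hz : z p < z q) :
    (Xset z p q).card < (Yset z p q).card := by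
  have h1 : (Xset z p q).card ≤ ((Yset z p q).erase (p, q)).card :=
    Finset.card_le_card_of_injOn _ (psi_maps hpq hz) (psi_inj hpq)
  have h2 := Finset.card_erase_add_one (pq_mem_Yset hpq hz)
  omega

lemma card_Y_eq {z : Perm (Fin n)} {p q : Fin n} (hpq : p < q) (hz : z p < z q)
    (hni : ∀ a : Fin n, p < a → a < q → z a < z p ∨ z q < z a) :
    (Yset z p q).card = (Xset z p q).card + 1 := by
  have h1 : (Xset z p q).card = ((Yset z p q).erase (p, q)).card := by
    apply Finset.card_bij (fun x _ => psi p q x) (psi_maps hpq hz)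
    · intro x hx y hy hxy; exact psi_inj hpq (Finset.mem_coe.2 hx) (Finset.mem_coe.2 hy) hxy
    · intro y hy
      obtain ⟨x, hx, hxy⟩ := psi_surj hpq hz hni y hy
      exact ⟨x, hx, hxy⟩
  have h2 := Finset.card_erase_add_one (pq_mem_Yset hpq hz)
  omega

lemma invLen_mul_swap_lt {z : Perm (Fin n)} {p q : Fin n} (hpq : p < q) (hz : z p < z q) :
    invLen z < invLen (z * swap p q) := by
  have := invLen_decomp z p q
  have := card_X_lt_card_Y hpq hz
  omega

lemma invLen_mul_swap_eq {z : Perm (Fin n)} {p q : Fin n} (hpq : p < q) (hz : z p < z q)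
    (hni : ∀ a : Fin n, p < a → a < q → z a < z p ∨ z q < z a) :
    invLen (z * swap p q) = invLen z + 1 := by
  have := invLen_decomp z p q
  have := card_Y_eq hpq hz hni
  omega


/-- number of positions `b < a` with `z b ≥ r` -/
def cnt (z : Perm (Fin n)) (a r : ℕ) : ℕ :=
  (Finset.univ.filter fun b : Fin n => (b : ℕ) < a ∧ r ≤ (z b : ℕ)).card

/-- entries in positions `[a, a')` with value `≥ r` -/
def mid (z : Perm (Fin n)) (a a' r : ℕ) : ℕ :=
  (Finset.univ.filter fun b : Fin n => a ≤ (b : ℕ) ∧ (b : ℕ) < a' ∧ r ≤ (z b : ℕ)).card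

def Dom (u v : Perm (Fin n)) : Prop := ∀ a r : ℕ, cnt u a r ≤ cnt v a r

lemma dom_refl (u : Perm (Fin n)) : Dom u u := fun _ _ => le_refl _

lemma dom_trans {u v w : Perm (Fin n)} (h1 : Dom u v) (h2 : Dom v w) : Dom u w :=
  fun a r => (h1 a r).trans (h2 a r)

lemma cnt_split {z : Perm (Fin n)} {a a' : ℕ} (h : a ≤ a') (r : ℕ) :
    cnt z a' r = cnt z a r + mid z a a' r := by
  rw [cnt, ← Finset.card_filter_add_card_filter_not
    (p := fun b : Fin n => (b : ℕ) < a), Finset.filter_filter, Finset.filter_filter]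
  congr 1
  · apply Finset.card_nbij' id id <;> intro b hb <;>
      simp only [Finset.mem_coe, Finset.mem_filter, Finset.mem_univ, true_and, id] at * <;> omega
  · rw [mid]; apply Finset.card_nbij' id id <;> intro b hb <;>
      simp only [Finset.mem_coe, Finset.mem_filter, Finset.mem_univ, true_and, id] at * <;> omega

lemma cnt_succ (z : Perm (Fin n)) (i : Fin n) (r : ℕ) :
    cnt z ((i : ℕ) + 1) r = cnt z i r + (if r ≤ (z i : ℕ) then 1 else 0) := by
  rw [cnt_split (Nat.le_succ _) r]
  congr 1
  rw [mid]
  by_cases hr : r ≤ (z i : ℕ)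
  · rw [if_pos hr]
    rw [Finset.card_eq_one]
    refine ⟨i, ?_⟩
    ext b
    simp only [Finset.mem_filter, Finset.mem_univ, true_and, Finset.mem_singleton]
    constructor
    · rintro ⟨h1, h2, -⟩
      exact Fin.ext (by omega)
    · rintro rfl; exact ⟨le_refl _, by omega, hr⟩
  · rw [if_neg hr]
    rw [Finset.card_eq_zero]
    ext b
    simp only [Finset.mem_filter, Finset.mem_univ, true_and, Finset.notMem_empty, iff_false]
    rintro ⟨h1, h2, h3⟩
    have : b = i := Fin.ext (by omega)
    exact hr (this ▸ h3)

lemma mid_le_mid {z w : Perm (Fin n)} {a a' r r' : ℕ}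
    (h : ∀ b : Fin n, a ≤ (b : ℕ) → (b : ℕ) < a' → r ≤ (z b : ℕ) → r' ≤ (w b : ℕ)) :
    mid z a a' r ≤ mid w a a' r' := by
  apply Finset.card_le_card
  intro b hb
  simp only [Finset.mem_filter, Finset.mem_univ, true_and] at *
  exact ⟨hb.1, hb.2.1, h b hb.1 hb.2.1 hb.2.2⟩

lemma cnt_eq_of_prefix {u v : Perm (Fin n)} {a : ℕ}
    (h : ∀ b : Fin n, (b : ℕ) < a → u b = v b) (r : ℕ) : cnt u a r = cnt v a r := by
  unfold cnt
  congr 1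
  apply Finset.filter_congr
  intro b _
  constructor
  · rintro ⟨h1, h2⟩; exact ⟨h1, (h b h1) ▸ h2⟩
  · rintro ⟨h1, h2⟩; exact ⟨h1, (h b h1).symm ▸ h2⟩

/-- the key two-point exchange formula for counts -/
lemma cnt_mul_swap (z : Perm (Fin n)) {p q : Fin n} (hpq : p ≠ q) (a r : ℕ) :
    cnt (z * swap p q) a r
      + (if (p : ℕ) < a ∧ r ≤ (z p : ℕ) then 1 else 0)
      + (if (q : ℕ) < a ∧ r ≤ (z q : ℕ) then 1 else 0)
    = cnt z a r
      + (if (p : ℕ) < a ∧ r ≤ (z q : ℕ) then 1 else 0)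
      + (if (q : ℕ) < a ∧ r ≤ (z p : ℕ) then 1 else 0) := by
  classical
  have hcard : ∀ w : Perm (Fin n), cnt w a r =
      ∑ b : Fin n, (if (b : ℕ) < a ∧ r ≤ (w b : ℕ) then 1 else 0) := by
    intro w; rw [cnt, Finset.card_filter]
  rw [hcard, hcard]
  have hq : q ∈ Finset.univ.erase p := Finset.mem_erase.2 ⟨Ne.symm hpq, Finset.mem_univ _⟩
  have hsplit : ∀ f : Fin n → ℕ, ∑ b : Fin n, f b =
      f p + (f q + ∑ b ∈ (Finset.univ.erase p).erase q, f b) := by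
    intro f
    rw [Finset.add_sum_erase _ f hq, Finset.add_sum_erase _ f (Finset.mem_univ p)]
  rw [hsplit, hsplit (fun b => if (b : ℕ) < a ∧ r ≤ (z b : ℕ) then 1 else 0)]
  have hrest : ∑ b ∈ (Finset.univ.erase p).erase q,
      (if (b : ℕ) < a ∧ r ≤ ((z * swap p q) b : ℕ) then 1 else 0) =
      ∑ b ∈ (Finset.univ.erase p).erase q,
      (if (b : ℕ) < a ∧ r ≤ (z b : ℕ) then 1 else 0) := by
    apply Finset.sum_congr rfl
    intro b hb
    simp only [Finset.mem_erase] at hb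
    rw [Perm.mul_apply, swap_apply_of_ne_of_ne hb.2.1 hb.1]
  rw [hrest]
  have hp' : ((z * swap p q) p : ℕ) = (z q : ℕ) := by rw [Perm.mul_apply, swap_apply_left]
  have hq' : ((z * swap p q) q : ℕ) = (z p : ℕ) := by rw [Perm.mul_apply, swap_apply_right]
  rw [hp', hq']
  ring

lemma cnt_mul_swap_out {z : Perm (Fin n)} {p q : Fin n} (hpq : p < q) {a : ℕ}
    (ha : a ≤ (p : ℕ) ∨ (q : ℕ) < a) (r : ℕ) : cnt (z * swap p q) a r = cnt z a r := by
  have := cnt_mul_swap z (ne_of_lt hpq) a r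
  have hpq' : (p : ℕ) < (q : ℕ) := hpq
  rcases ha with ha | ha
  · rw [if_neg (by omega), if_neg (by omega), if_neg (by omega), if_neg (by omega)] at this
    omega
  · by_cases h1 : r ≤ (z p : ℕ) <;> by_cases h2 : r ≤ (z q : ℕ) <;>
      simp only [h1, h2, and_true, and_false, if_true, if_false,
        if_pos (show (p:ℕ) < a by omega), if_pos (show (q:ℕ) < a by omega)] at this <;>
      omega

lemma cnt_mul_swap_mid {z : Perm (Fin n)} {p q : Fin n} (hpq : p < q) {a : ℕ}
    (ha1 : (p : ℕ) < a) (ha2 : a ≤ (q : ℕ)) (r : ℕ) :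
    cnt (z * swap p q) a r + (if r ≤ (z p : ℕ) then 1 else 0)
      = cnt z a r + (if r ≤ (z q : ℕ) then 1 else 0) := by
  have := cnt_mul_swap z (ne_of_lt hpq) a r
  rw [if_neg (by omega : ¬((q:ℕ) < a ∧ r ≤ (z q : ℕ))),
      if_neg (by omega : ¬((q:ℕ) < a ∧ r ≤ (z p : ℕ)))] at this
  by_cases h1 : r ≤ (z p : ℕ) <;> by_cases h2 : r ≤ (z q : ℕ) <;>
    simp only [h1, h2, if_true, if_false, and_true, and_false, if_pos ha1] at this ⊢ <;>
    omega


/-- prefix variant of the strict inequality -/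
lemma cnt_strict_prefix {u v : Perm (Fin n)} {i : Fin n} {a r : ℕ}
    (hai : (i : ℕ) < a) (h0 : cnt u (i : ℕ) r ≤ cnt v (i : ℕ) r)
    (hvi : r ≤ (v i : ℕ)) (hui : ¬ r ≤ (u i : ℕ))
    (hmid : mid u ((i : ℕ) + 1) a r ≤ mid v ((i : ℕ) + 1) a r) :
    cnt u a r + 1 ≤ cnt v a r := by
  have du : cnt u a r = cnt u ((i : ℕ) + 1) r + mid u ((i : ℕ) + 1) a r :=
    cnt_split (by omega) r
  have dv : cnt v a r = cnt v ((i : ℕ) + 1) r + mid v ((i : ℕ) + 1) a r :=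
    cnt_split (by omega) r
  have su := cnt_succ u i r
  have sv := cnt_succ v i r
  rw [if_neg hui] at su
  rw [if_pos hvi] at sv
  omega

/-- suffix variant of the strict inequality -/
lemma cnt_strict_suffix {u v : Perm (Fin n)} {k : Fin n} {a r : ℕ}
    (hak : a ≤ (k : ℕ)) (hK : cnt u ((k : ℕ) + 1) r ≤ cnt v ((k : ℕ) + 1) r)
    (huk : r ≤ (u k : ℕ)) (hvk : ¬ r ≤ (v k : ℕ))
    (hmid : mid v a (k : ℕ) r ≤ mid u a (k : ℕ) r) :
    cnt u a r + 1 ≤ cnt v a r := by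
  have du : cnt u (k : ℕ) r = cnt u a r + mid u a (k : ℕ) r := cnt_split hak r
  have dv : cnt v (k : ℕ) r = cnt v a r + mid v a (k : ℕ) r := cnt_split hak r
  have su := cnt_succ u k r
  have sv := cnt_succ v k r
  rw [if_pos huk] at su
  rw [if_neg hvk] at sv
  omega

/-- any Bruhat step is dominance-increasing -/
lemma step_dom {x y : Perm (Fin n)} (h : BruhatStep x y) : Dom x y := by
  obtain ⟨⟨t, ⟨p, q, hpq, rfl⟩, rfl⟩, hlen⟩ := h
  -- reduce to the case p < q
  wlog hlt : p < q generalizing p q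
  · have hqp : q < p := lt_of_le_of_ne (not_lt.mp hlt) (Ne.symm hpq)
    rw [swap_comm p q] at hlen ⊢
    exact this q p (Ne.symm hpq) hlen hqp
  -- x p < x q, else length would decrease
  have hxpq : x p < x q := by
    rcases lt_or_gt_of_ne (fun hh : x p = x q => hpq (x.injective hh)) with h' | h'
    · exact h'
    · exfalso
      have h2 : (x * swap p q) p < (x * swap p q) q := by
        rw [Perm.mul_apply, Perm.mul_apply, swap_apply_left, swap_apply_right]
        exact h'
      have h3 := invLen_mul_swap_lt hlt h2
      rw [mul_assoc, swap_mul_self, mul_one] at h3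
      omega
  intro a r
  by_cases ha : a ≤ (p : ℕ) ∨ (q : ℕ) < a
  · rw [cnt_mul_swap_out hlt ha r]
  · push_neg at ha
    have := cnt_mul_swap_mid (z := x) hlt ha.1 ha.2 r
    have hv : (x p : ℕ) < (x q : ℕ) := hxpq
    by_cases h1 : r ≤ (x p : ℕ) <;> by_cases h2 : r ≤ (x q : ℕ) <;>
      simp only [h1, h2, if_true, if_false] at this <;> omega

lemma le_dom {x y : Perm (Fin n)} (h : BruhatLE x y) : Dom x y := by
  induction h with
  | refl => exact dom_refl x
  | tail hab hbc ih => exact dom_trans ih (step_dom hbc)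

lemma invLen_bound (z : Perm (Fin n)) : invLen z ≤ n * n := by
  calc invLen z ≤ Fintype.card (Fin n × Fin n) := by
        apply le_trans (Finset.card_filter_le _ _) (le_of_eq (Finset.card_univ))
    _ = n * n := by rw [Fintype.card_prod, Fintype.card_fin]

/-- given strict dominance, produce a length-increasing step staying below v -/
lemma key_step {u v : Perm (Fin n)} (hdom : Dom u v) (hne : u ≠ v) :
    ∃ w : Perm (Fin n), BruhatStep u w ∧ invLen w = invLen u + 1 ∧ Dom w v := by
  classical
  -- first position where u and v differ
  have hFne : (Finset.univ.filter fun b : Fin n => u b ≠ v b).Nonempty := by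
    by_contra hF
    rw [Finset.not_nonempty_iff_eq_empty, Finset.filter_eq_empty_iff] at hF
    exact hne (Equiv.ext fun b => not_ne_iff.mp (hF (Finset.mem_univ b)))
  obtain ⟨i, hiF, hileast⟩ : ∃ j ∈ (Finset.univ.filter fun b : Fin n => u b ≠ v b),
      ∀ b ∈ (Finset.univ.filter fun b : Fin n => u b ≠ v b), j ≤ b :=
    ⟨_, Finset.min'_mem _ hFne, fun b hb => Finset.min'_le _ b hb⟩
  rw [Finset.mem_filter] at hiF
  have hidiff : u i ≠ v i := hiF.2
  have hprefix : ∀ b : Fin n, (b : ℕ) < (i : ℕ) → u b = v b := by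
    intro b hb
    by_contra hbne
    have h2 : i ≤ b := hileast b (Finset.mem_filter.2 ⟨Finset.mem_univ b, hbne⟩)
    have h3 : (i : ℕ) ≤ (b : ℕ) := h2
    omega
  -- u i < v i
  have hui_lt : (u i : ℕ) < (v i : ℕ) := by
    rcases lt_or_gt_of_ne (fun hh : u i = v i => hidiff hh) with h' | h'
    · exact h'
    · exfalso
      have h1 := cnt_succ u i (u i : ℕ)
      have h2 := cnt_succ v i (u i : ℕ)
      rw [if_pos (le_refl _)] at h1
      rw [if_neg (by exact not_le.mpr h')] at h2
      have h3 := cnt_eq_of_prefix hprefix (u i : ℕ)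
      have h4 := hdom ((i : ℕ) + 1) (u i : ℕ)
      omega
  -- minimal j with i < j and u i < u j ≤ v i
  have hGne : (Finset.univ.filter fun b : Fin n =>
      i < b ∧ (u i : ℕ) < (u b : ℕ) ∧ (u b : ℕ) ≤ (v i : ℕ)).Nonempty := by
    refine ⟨u.symm (v i), Finset.mem_filter.2 ⟨Finset.mem_univ _, ?_, ?_, ?_⟩⟩
    · -- i < u.symm (v i)
      set j0 := u.symm (v i) with hj0
      have hval : u j0 = v i := Equiv.apply_symm_apply u (v i)
      have hne0 : j0 ≠ i := fun hh => hidiff (hh ▸ hval)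
      rcases lt_or_gt_of_ne hne0 with h' | h'
      · exfalso
        have := hprefix j0 h'
        exact absurd (v.injective (this ▸ hval)) hne0
      · exact h'
    · rw [Equiv.apply_symm_apply]; exact hui_lt
    · rw [Equiv.apply_symm_apply]
  obtain ⟨j, hjF, hjleast⟩ : ∃ j ∈ (Finset.univ.filter fun b : Fin n =>
      i < b ∧ (u i : ℕ) < (u b : ℕ) ∧ (u b : ℕ) ≤ (v i : ℕ)),
      ∀ b ∈ (Finset.univ.filter fun b : Fin n =>
      i < b ∧ (u i : ℕ) < (u b : ℕ) ∧ (u b : ℕ) ≤ (v i : ℕ)), j ≤ b :=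
    ⟨_, Finset.min'_mem _ hGne, fun b hb => Finset.min'_le _ b hb⟩
  rw [Finset.mem_filter] at hjF
  obtain ⟨-, hij, huij, hujvi⟩ := hjF
  have hjmin : ∀ b : Fin n, i < b → b < j → ¬((u i : ℕ) < (u b : ℕ) ∧ (u b : ℕ) ≤ (v i : ℕ)) := by
    intro b hb1 hb2 hcon
    have : j ≤ b := hjleast b (Finset.mem_filter.2 ⟨Finset.mem_univ b, hb1, hcon⟩)
    exact absurd hb2 (not_lt.mpr this)
  -- the swap increases length by exactly one
  have huij' : u i < u j := huij
  have hni : ∀ a : Fin n, i < a → a < j → u a < u i ∨ u j < u a := by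
    intro a ha1 ha2
    have h' := hjmin a ha1 ha2
    rcases lt_or_gt_of_ne (fun hh : u a = u i => (ne_of_lt ha1) (u.injective hh).symm) with hc | hc
    · exact Or.inl hc
    · right
      have : ¬ (u a : ℕ) ≤ (v i : ℕ) := fun hh => h' ⟨hc, hh⟩
      have h2 : (u j : ℕ) < (u a : ℕ) := by omega
      exact h2
  have hlen : invLen (u * swap i j) = invLen u + 1 := invLen_mul_swap_eq hij huij' hni
  refine ⟨u * swap i j, ⟨⟨swap i j, ⟨i, j, ne_of_lt hij, rfl⟩, rfl⟩, by omega⟩, hlen, ?_⟩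
  -- dominance of u * swap i j below v
  intro a r
  by_cases ha : a ≤ (i : ℕ) ∨ (j : ℕ) < a
  · rw [cnt_mul_swap_out hij ha r]; exact hdom a r
  · push_neg at ha
    obtain ⟨ha1, ha2⟩ := ha
    have hmid := cnt_mul_swap_mid (z := u) hij ha1 ha2 r
    by_cases h1 : r ≤ (u i : ℕ)
    · have h2 : r ≤ (u j : ℕ) := by omega
      rw [if_pos h1, if_pos h2] at hmid
      have := hdom a r
      omega
    · by_cases h2 : r ≤ (u j : ℕ)
      · rw [if_neg h1, if_pos h2] at hmid
        -- need cnt u a r + 1 ≤ cnt v a r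
        have hstrict : cnt u a r + 1 ≤ cnt v a r := by
          apply cnt_strict_prefix ha1 (hdom (i : ℕ) r) (by omega) h1
          -- mid u (i+1) a r ≤ mid v (i+1) a r via threshold (v i) + 1
          have e1 : mid u ((i : ℕ) + 1) a r ≤ mid u ((i : ℕ) + 1) a ((v i : ℕ) + 1) := by
            apply mid_le_mid
            intro b hb1 hb2 hb3
            have hbj : b < j := by
              have : (b : ℕ) < (j : ℕ) := by omega
              exact this
            have hbi : i < b := by
              have : (i : ℕ) < (b : ℕ) := by omega
              exact this
            have := hjmin b hbi hbj
            omega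
          have e2 : mid u ((i : ℕ) + 1) a ((v i : ℕ) + 1) ≤ mid v ((i : ℕ) + 1) a ((v i : ℕ) + 1) := by
            have du : cnt u a ((v i : ℕ) + 1) = cnt u ((i : ℕ) + 1) ((v i : ℕ) + 1)
                + mid u ((i : ℕ) + 1) a ((v i : ℕ) + 1) := cnt_split (by omega) _
            have dv : cnt v a ((v i : ℕ) + 1) = cnt v ((i : ℕ) + 1) ((v i : ℕ) + 1)
                + mid v ((i : ℕ) + 1) a ((v i : ℕ) + 1) := cnt_split (by omega) _
            have su := cnt_succ u i ((v i : ℕ) + 1)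
            have sv := cnt_succ v i ((v i : ℕ) + 1)
            rw [if_neg (by omega)] at su
            rw [if_neg (by omega)] at sv
            have hpre := cnt_eq_of_prefix hprefix ((v i : ℕ) + 1)
            have := hdom a ((v i : ℕ) + 1)
            omega
          have e3 : mid v ((i : ℕ) + 1) a ((v i : ℕ) + 1) ≤ mid v ((i : ℕ) + 1) a r := by
            apply mid_le_mid
            intro b hb1 hb2 hb3
            omega
          omega
        omega
      · rw [if_neg h1, if_neg h2] at hmid
        have := hdom a r
        omega

/-- dominance implies Bruhat order -/
lemma dom_le {v : Perm (Fin n)} : ∀ (m : ℕ) (u : Perm (Fin n)),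
    n * n ≤ invLen u + m → Dom u v → BruhatLE u v := by
  intro m
  induction m with
  | zero =>
    intro u hb hdom
    by_cases he : u = v
    · exact he ▸ Relation.ReflTransGen.refl
    · obtain ⟨w, -, hlen, -⟩ := key_step hdom he
      have := invLen_bound w
      omega
  | succ m ih =>
    intro u hb hdom
    by_cases he : u = v
    · exact he ▸ Relation.ReflTransGen.refl
    · obtain ⟨w, hstep, hlen, hdw⟩ := key_step hdom he
      exact Relation.ReflTransGen.head hstep (ih w (by omega) hdw)

lemma dom_to_le {u v : Perm (Fin n)} (hdom : Dom u v) : BruhatLE u v :=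
  dom_le (n * n) u (by omega) hdom


end Lift

open Lift

/-- Generalized lifting property: if `u < v` and `(i k)` is inversion-minimal on
`(u,v)`, then `u ≤ v(ik) ⋖ v` and `u ⋖ u(ik) ≤ v`. -/
theorem stmt6 (n : ℕ) (u v : Perm (Fin n)) (h : BruhatLT u v) (i k : Fin n)
    (hmin : InvMinimal u v i k) :
    BruhatLE u (v * Equiv.swap i k) ∧ BruhatCov (v * Equiv.swap i k) v ∧
      BruhatCov u (u * Equiv.swap i k) ∧ BruhatLE (u * Equiv.swap i k) v := by
  obtain ⟨hle, hneq⟩ := h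
  obtain ⟨hik, hvik, huik, hminq⟩ := hmin
  have hdomuv : Dom u v := le_dom hle
  have huik' : (u i : ℕ) < (u k : ℕ) := huik
  have hvik' : (v k : ℕ) < (v i : ℕ) := hvik
  -- interior dichotomy from inversion-minimality
  have hdi : ∀ b : Fin n, i < b → b < k →
      ((v i : ℕ) < (v b : ℕ) ∧ (u k : ℕ) < (u b : ℕ)) ∨
      ((v b : ℕ) < (v k : ℕ) ∧ (u b : ℕ) < (u i : ℕ)) := by
    intro b hb1 hb2
    have hA := hminq i b (le_refl i) hb1 (le_of_lt hb2) (fun hc : i = i ∧ b = k => (ne_of_lt hb2) hc.2)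
    have hB := hminq b k (le_of_lt hb1) hb2 (le_refl k) (fun hc : b = i ∧ k = k => (ne_of_gt hb1) hc.1)
    rcases lt_or_gt_of_ne (fun hh : v b = v i => (ne_of_gt hb1) (v.injective hh)) with hc | hc
    · right
      have h1 : ¬ (u i < u b) := fun hh => hA ⟨hc, hh⟩
      have h2 : u b < u i := lt_of_le_of_ne (not_lt.mp h1)
        (fun hh => (ne_of_gt hb1) (u.injective hh))
      have h3 : u b < u k := h2.trans huik
      have h4 : ¬ (v k < v b) := fun hh => hB ⟨hh, h3⟩
      have h5 : v b < v k := lt_of_le_of_ne (not_lt.mp h4)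
        (fun hh => (ne_of_lt hb2) (v.injective hh))
      exact ⟨h5, h2⟩
    · left
      have h1 : v k < v b := hvik.trans hc
      have h2 : ¬ u b < u k := fun hh => hB ⟨h1, hh⟩
      have h3 : u k < u b := lt_of_le_of_ne (not_lt.mp h2)
        (fun hh => (ne_of_lt hb2) (u.injective hh).symm)
      exact ⟨hc, h3⟩
  -- strict dominance inequalities
  have C1 : ∀ a r : ℕ, (i : ℕ) < a → a ≤ (k : ℕ) → (v k : ℕ) < r → r ≤ (v i : ℕ) →
      cnt u a r + 1 ≤ cnt v a r := by
    intro a r ha1 ha2 hr1 hr2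
    by_cases hr : r ≤ (u i : ℕ)
    · apply cnt_strict_suffix ha2 (hdomuv ((k : ℕ) + 1) r) (by omega) (by omega)
      apply mid_le_mid
      intro b hb1 hb2 hb3
      rcases hdi b (show (i : ℕ) < (b : ℕ) by omega) (show (b : ℕ) < (k : ℕ) by omega)
        with ⟨h1, h2⟩ | ⟨h1, h2⟩ <;> omega
    · apply cnt_strict_prefix ha1 (hdomuv (i : ℕ) r) hr2 hr
      apply mid_le_mid
      intro b hb1 hb2 hb3
      rcases hdi b (show (i : ℕ) < (b : ℕ) by omega) (show (b : ℕ) < (k : ℕ) by omega)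
        with ⟨h1, h2⟩ | ⟨h1, h2⟩ <;> omega
  have C2 : ∀ a r : ℕ, (i : ℕ) < a → a ≤ (k : ℕ) → (u i : ℕ) < r → r ≤ (u k : ℕ) →
      cnt u a r + 1 ≤ cnt v a r := by
    intro a r ha1 ha2 hr1 hr2
    by_cases hr : r ≤ (v i : ℕ)
    · apply cnt_strict_prefix ha1 (hdomuv (i : ℕ) r) hr (by omega)
      apply mid_le_mid
      intro b hb1 hb2 hb3
      rcases hdi b (show (i : ℕ) < (b : ℕ) by omega) (show (b : ℕ) < (k : ℕ) by omega)
        with ⟨h1, h2⟩ | ⟨h1, h2⟩ <;> omega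
    · apply cnt_strict_suffix ha2 (hdomuv ((k : ℕ) + 1) r) hr2 (by omega)
      apply mid_le_mid
      intro b hb1 hb2 hb3
      rcases hdi b (show (i : ℕ) < (b : ℕ) by omega) (show (b : ℕ) < (k : ℕ) by omega)
        with ⟨h1, h2⟩ | ⟨h1, h2⟩ <;> omega
  -- covering: v * (ik) ⋖ v
  have hcov1 : BruhatCov (v * swap i k) v := by
    have hz : (v * swap i k) i < (v * swap i k) k := by
      rw [Perm.mul_apply, Perm.mul_apply, swap_apply_left, swap_apply_right]
      exact hvik
    have hni : ∀ a : Fin n, i < a → a < k →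
        (v * swap i k) a < (v * swap i k) i ∨ (v * swap i k) k < (v * swap i k) a := by
      intro a ha1 ha2
      rw [Perm.mul_apply, swap_apply_of_ne_of_ne (ne_of_gt ha1) (ne_of_lt ha2),
        Perm.mul_apply, swap_apply_left, Perm.mul_apply, swap_apply_right]
      rcases hdi a ha1 ha2 with ⟨h1, h2⟩ | ⟨h1, h2⟩
      · exact Or.inr h1
      · exact Or.inl h1
    have hlen := invLen_mul_swap_eq hik hz hni
    rw [mul_assoc, swap_mul_self, mul_one] at hlen
    refine ⟨Relation.ReflTransGen.single ⟨⟨swap i k, ⟨i, k, ne_of_lt hik, rfl⟩, ?_⟩,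
      by omega⟩, hlen⟩
    rw [mul_assoc, swap_mul_self, mul_one]
  -- covering: u ⋖ u * (ik)
  have hcov2 : BruhatCov u (u * swap i k) := by
    have hni : ∀ a : Fin n, i < a → a < k → u a < u i ∨ u k < u a := by
      intro a ha1 ha2
      rcases hdi a ha1 ha2 with ⟨h1, h2⟩ | ⟨h1, h2⟩
      · exact Or.inr h2
      · exact Or.inl h2
    have hlen := invLen_mul_swap_eq hik huik hni
    exact ⟨Relation.ReflTransGen.single ⟨⟨swap i k, ⟨i, k, ne_of_lt hik, rfl⟩, rfl⟩,
      by omega⟩, hlen⟩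
  -- u * (ik) ≤ v
  have hle2 : BruhatLE (u * swap i k) v := by
    apply dom_to_le
    intro a r
    by_cases ha : a ≤ (i : ℕ) ∨ (k : ℕ) < a
    · rw [cnt_mul_swap_out hik ha r]; exact hdomuv a r
    · push_neg at ha
      have hmid := cnt_mul_swap_mid (z := u) hik ha.1 ha.2 r
      by_cases h1 : r ≤ (u i : ℕ) <;> by_cases h2 : r ≤ (u k : ℕ) <;>
        simp only [h1, h2, if_true, if_false] at hmid
      · have := hdomuv a r; omega
      · omega
      · have := C2 a r ha.1 ha.2 (by omega) h2; omega
      · have := hdomuv a r; omega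
  -- u ≤ v * (ik)
  have hle1 : BruhatLE u (v * swap i k) := by
    apply dom_to_le
    intro a r
    by_cases ha : a ≤ (i : ℕ) ∨ (k : ℕ) < a
    · rw [cnt_mul_swap_out hik ha r]; exact hdomuv a r
    · push_neg at ha
      have hmid := cnt_mul_swap_mid (z := v) hik ha.1 ha.2 r
      by_cases h1 : r ≤ (v i : ℕ) <;> by_cases h2 : r ≤ (v k : ℕ) <;>
        simp only [h1, h2, if_true, if_false] at hmid
      · have := hdomuv a r; omega
      · have := C1 a r ha.1 ha.2 (by omega) h1; omega
      · omega
      · have := hdomuv a r; omega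
  exact ⟨hle1, hcov1, hcov2, hle2⟩
end

section
/- Let u < v in Bruhat order on S_n. Then there exists a maximal chain u = x_0 ⋖ x_1 ⋖ ⋯ ⋖ x_l = v in the Bruhat interval [u,v] such that for each step, the transposition x_i⁻¹x_{i+1} equals some transposition t with v ⋗ v·t ≥ u (i.e., it comes from a coatom of the interval). -/
open Equiv

section Aux
open Finset
variable {n : ℕ}

def dd (z : Perm (Fin n)) (r j : ℕ) : ℕ :=
  (Finset.univ.filter fun a : Fin n => (a : ℕ) < r ∧ j ≤ (z a : ℕ)).card

lemma dd_eq_sum (z : Perm (Fin n)) (r j : ℕ) :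
    dd z r j = ∑ a : Fin n, if (a : ℕ) < r ∧ j ≤ (z a : ℕ) then 1 else 0 := by
  rw [dd, Finset.card_filter]

lemma dd_split (z : Perm (Fin n)) {r1 r2 : ℕ} (h : r1 ≤ r2) (j : ℕ) :
    dd z r2 j = dd z r1 j +
      (Finset.univ.filter fun a : Fin n => r1 ≤ (a:ℕ) ∧ (a:ℕ) < r2 ∧ j ≤ (z a : ℕ)).card := by
  rw [dd_eq_sum, dd_eq_sum, Finset.card_filter, ← Finset.sum_add_distrib]
  exact Finset.sum_congr rfl fun a _ => by split_ifs <;> omega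

lemma dd_succ (z : Perm (Fin n)) (a : Fin n) (j : ℕ) :
    dd z ((a:ℕ)+1) j = dd z (a:ℕ) j + (if j ≤ (z a : ℕ) then 1 else 0) := by
  have h1 : (if j ≤ (z a : ℕ) then 1 else 0)
      = ∑ b : Fin n, if b = a then (if j ≤ (z b : ℕ) then 1 else 0) else 0 := by
    rw [Finset.sum_ite_eq' Finset.univ a]
    simp
  rw [h1, dd_eq_sum, dd_eq_sum, ← Finset.sum_add_distrib]
  refine Finset.sum_congr rfl fun b _ => ?_
  by_cases hb : b = a
  · subst hb; simp only [if_pos rfl]; split_ifs <;> omega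
  · have hv : (b:ℕ) ≠ (a:ℕ) := fun h => hb (Fin.ext h)
    simp only [if_neg hb]
    split_ifs <;> omega

lemma dd_thresh (z : Perm (Fin n)) (r : ℕ) {j J : ℕ} (h : j ≤ J) :
    dd z r j = dd z r J +
      (Finset.univ.filter fun a : Fin n => (a:ℕ) < r ∧ j ≤ (z a : ℕ) ∧ (z a : ℕ) < J).card := by
  rw [dd_eq_sum, dd_eq_sum, Finset.card_filter, ← Finset.sum_add_distrib]
  exact Finset.sum_congr rfl fun a _ => by split_ifs <;> omega

lemma dd_congr_prefix {u v : Perm (Fin n)} {r : ℕ}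
    (h : ∀ a : Fin n, (a:ℕ) < r → u a = v a) (j : ℕ) : dd u r j = dd v r j := by
  unfold dd
  congr 1
  apply Finset.filter_congr
  intro a _
  constructor
  · rintro ⟨h1, h2⟩; exact ⟨h1, by rw [← h a h1]; exact h2⟩
  · rintro ⟨h1, h2⟩; exact ⟨h1, by rw [h a h1]; exact h2⟩

lemma card_lt_exists {P Q : Fin n → Prop} [DecidablePred P] [DecidablePred Q]
    (h : (Finset.univ.filter Q).card < (Finset.univ.filter P).card) :
    ∃ a, P a ∧ ¬ Q a := by
  by_contra hc
  push_neg at hc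
  have hsub : Finset.univ.filter P ⊆ Finset.univ.filter Q := by
    intro a ha
    rw [Finset.mem_filter] at ha ⊢
    exact ⟨ha.1, hc a ha.2⟩
  exact absurd (Finset.card_le_card hsub) (by omega)

lemma dd_mul_swap (u : Perm (Fin n)) {i k : Fin n} (hik : i < k) (hu : u i < u k) (r j : ℕ) :
    dd (u * Equiv.swap i k) r j
      = dd u r j + (if (i:ℕ) < r ∧ r ≤ (k:ℕ) ∧ (u i:ℕ) < j ∧ j ≤ (u k:ℕ) then 1 else 0) := by
  have hne : i ≠ k := ne_of_lt hik
  have hki : k ≠ i := hne.symm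
  have hval : (i:ℕ) < (k:ℕ) := hik
  have huval : (u i : ℕ) < (u k : ℕ) := hu
  have happ : ∀ a : Fin n, (u * Equiv.swap i k) a = u (Equiv.swap i k a) := fun a => rfl
  rw [dd_eq_sum, dd_eq_sum]
  rw [← Finset.add_sum_erase _ _ (Finset.mem_univ i),
      ← Finset.add_sum_erase _ _ (Finset.mem_erase.2 ⟨hki, Finset.mem_univ k⟩)]
  conv_rhs => rw [← Finset.add_sum_erase _ (fun a : Fin n => if (a:ℕ) < r ∧ j ≤ (u a : ℕ) then 1 else 0) (Finset.mem_univ i),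
      ← Finset.add_sum_erase _ _ (Finset.mem_erase.2 ⟨hki, Finset.mem_univ k⟩)]
  have hrest : ∑ a ∈ (Finset.univ.erase i).erase k,
        (if (a:ℕ) < r ∧ j ≤ ((u * Equiv.swap i k) a : ℕ) then 1 else 0)
      = ∑ a ∈ (Finset.univ.erase i).erase k,
        (if (a:ℕ) < r ∧ j ≤ (u a : ℕ) then 1 else 0) := by
    refine Finset.sum_congr rfl fun a ha => ?_
    rw [Finset.mem_erase, Finset.mem_erase] at ha
    rw [happ, Equiv.swap_apply_of_ne_of_ne ha.2.1 ha.1]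
  rw [hrest, happ, happ, Equiv.swap_apply_left, Equiv.swap_apply_right]
  split_ifs <;> omega

def Invs (z : Perm (Fin n)) : Finset (Fin n × Fin n) :=
  Finset.univ.filter fun p => p.1 < p.2 ∧ z p.2 < z p.1

lemma invLen_eq_card (z : Perm (Fin n)) : invLen z = (Invs z).card := rfl

def Phi (i k : Fin n) (p : Fin n × Fin n) : Fin n × Fin n :=
  if Equiv.swap i k p.1 < Equiv.swap i k p.2 then (Equiv.swap i k p.1, Equiv.swap i k p.2) else p

lemma phi_injOn (i k : Fin n) {S : Finset (Fin n × Fin n)} (hS : ∀ p ∈ S, p.1 < p.2) :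
    Set.InjOn (Phi i k) S := by
  intro a ha b hb hab
  have hσσ : ∀ c : Fin n, Equiv.swap i k (Equiv.swap i k c) = c :=
    fun c => Equiv.swap_apply_self i k c
  unfold Phi at hab
  split_ifs at hab with h1 h2 h2
  · have e1 := congrArg Prod.fst hab
    have e2 := congrArg Prod.snd hab
    simp only at e1 e2
    exact Prod.ext ((Equiv.swap i k).injective e1) ((Equiv.swap i k).injective e2)
  · exfalso
    have e1 : Equiv.swap i k b.1 = a.1 := by rw [← congrArg Prod.fst hab]; exact hσσ _
    have e2 : Equiv.swap i k b.2 = a.2 := by rw [← congrArg Prod.snd hab]; exact hσσ _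
    rw [e1, e2] at h2
    exact h2 (hS a ha)
  · exfalso
    have e1 : Equiv.swap i k a.1 = b.1 := by rw [congrArg Prod.fst hab]; exact hσσ _
    have e2 : Equiv.swap i k a.2 = b.2 := by rw [congrArg Prod.snd hab]; exact hσσ _
    rw [e1, e2] at h1
    exact h1 (hS b hb)
  · exact hab

lemma phi_maps_A (u : Perm (Fin n)) {i k : Fin n} (hik : i < k) (hu : u i < u k) :
    ∀ p ∈ Invs u, Phi i k p ∈ (Invs (u * Equiv.swap i k)).erase (i, k) := by
  rintro ⟨a, b⟩ hp
  rw [Invs, Finset.mem_filter] at hp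
  obtain ⟨-, hab, hw⟩ := hp
  have happ : ∀ c, (u * Equiv.swap i k) c = u (Equiv.swap i k c) := fun c => rfl
  have hσσ : ∀ c : Fin n, Equiv.swap i k (Equiv.swap i k c) = c :=
    fun c => Equiv.swap_apply_self i k c
  rw [Finset.mem_erase, Invs, Finset.mem_filter]
  unfold Phi
  split_ifs with hσ
  · refine ⟨?_, Finset.mem_univ _, hσ, ?_⟩
    · intro heq
      have e1 : Equiv.swap i k a = i := congrArg Prod.fst heq
      have e2 : Equiv.swap i k b = k := congrArg Prod.snd heq
      have : a = k := by rw [← hσσ a, e1, Equiv.swap_apply_left]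
      have hbk : b = i := by rw [← hσσ b, e2, Equiv.swap_apply_right]
      rw [this, hbk] at hab
      exact absurd (lt_trans hab hik) (lt_irrefl k)
    · simp only [happ, hσσ]
      exact hw
  · simp only [happ]
    by_cases hai : a = i
    · subst hai
      by_cases hbk : b = k
      · subst hbk; exact absurd hw (not_lt.2 hu.le)
      · have hbi : b ≠ a := (ne_of_gt hab)
        have hσa : Equiv.swap a k a = k := Equiv.swap_apply_left a k
        have hσb : Equiv.swap a k b = b := Equiv.swap_apply_of_ne_of_ne hbi hbk
        refine ⟨fun heq => hbk (congrArg Prod.snd heq), Finset.mem_univ _, hab, ?_⟩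
        rw [hσa, hσb]
        exact lt_trans hw hu
    · by_cases hak : a = k
      · subst hak
        exfalso
        have hbk : b ≠ a := (ne_of_gt hab)
        have hbi : b ≠ i := fun h => absurd (h ▸ hab) (not_lt.2 (le_of_lt hik))
        rw [Equiv.swap_apply_right, Equiv.swap_apply_of_ne_of_ne hbi hbk] at hσ
        exact hσ (lt_trans hik hab)
      · by_cases hbi : b = i
        · subst hbi
          exfalso
          have hbk2 : a ≠ k := hak
          rw [Equiv.swap_apply_left, Equiv.swap_apply_of_ne_of_ne (ne_of_lt hab) hbk2] at hσ
          exact hσ (lt_trans hab hik)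
        · by_cases hbk : b = k
          · subst hbk
            refine ⟨fun heq => hai (congrArg Prod.fst heq), Finset.mem_univ _, hab, ?_⟩
            rw [Equiv.swap_apply_right, Equiv.swap_apply_of_ne_of_ne hai hak]
            exact lt_trans hu hw
          · exfalso
            rw [Equiv.swap_apply_of_ne_of_ne hai hak, Equiv.swap_apply_of_ne_of_ne hbi hbk] at hσ
            exact hσ hab

lemma mem_invs_swap (u : Perm (Fin n)) {i k : Fin n} (hik : i < k) (hu : u i < u k) :
    (i, k) ∈ Invs (u * Equiv.swap i k) := by
  rw [Invs, Finset.mem_filter]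
  refine ⟨Finset.mem_univ _, hik, ?_⟩
  have : ∀ c, (u * Equiv.swap i k) c = u (Equiv.swap i k c) := fun c => rfl
  rw [this, this, Equiv.swap_apply_left, Equiv.swap_apply_right]
  exact hu

lemma invLen_lt_mul_swap (u : Perm (Fin n)) {i k : Fin n} (hik : i < k) (hu : u i < u k) :
    invLen u < invLen (u * Equiv.swap i k) := by
  have hinj := phi_injOn i k (S := Invs u)
    (fun p hp => ((Finset.mem_filter.1 hp).2).1)
  have hcard := Finset.card_le_card_of_injOn _ (phi_maps_A u hik hu) hinj
  rw [Finset.card_erase_of_mem (mem_invs_swap u hik hu)] at hcard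
  have hpos : 0 < (Invs (u * Equiv.swap i k)).card :=
    Finset.card_pos.2 ⟨_, mem_invs_swap u hik hu⟩
  rw [invLen_eq_card, invLen_eq_card]
  omega

lemma phi_maps_B (u : Perm (Fin n)) {i k : Fin n} (hik : i < k) (hu : u i < u k)
    (hmid : ∀ j : Fin n, i < j → j < k → ¬(u i < u j ∧ u j < u k)) :
    ∀ p ∈ (Invs (u * Equiv.swap i k)).erase (i, k), Phi i k p ∈ Invs u := by
  rintro ⟨a, b⟩ hp
  rw [Finset.mem_erase, Invs, Finset.mem_filter] at hp
  obtain ⟨hne, -, hab, hw⟩ := hp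
  have happ : ∀ c, (u * Equiv.swap i k) c = u (Equiv.swap i k c) := fun c => rfl
  simp only [happ] at hw
  rw [Invs, Finset.mem_filter]
  unfold Phi
  split_ifs with hσ
  · exact ⟨Finset.mem_univ _, hσ, hw⟩
  · refine ⟨Finset.mem_univ _, hab, ?_⟩
    by_cases hai : a = i
    · subst hai
      by_cases hbk : b = k
      · subst hbk; exact absurd rfl hne
      · have hbi : b ≠ a := (ne_of_gt hab)
        rw [Equiv.swap_apply_left, Equiv.swap_apply_of_ne_of_ne hbi hbk] at hσ hw
        have hblt : b < k := lt_of_le_of_ne (not_lt.1 hσ) hbk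
        have := hmid b hab hblt
        have hne2 : u b ≠ u a := u.injective.ne hbi
        rcases lt_or_gt_of_ne hne2 with h | h
        · exact h
        · exact absurd ⟨h, hw⟩ this
    · by_cases hak : a = k
      · subst hak
        exfalso
        have hbk : b ≠ a := (ne_of_gt hab)
        have hbi : b ≠ i := fun h => absurd (h ▸ hab) (not_lt.2 (le_of_lt hik))
        rw [Equiv.swap_apply_right, Equiv.swap_apply_of_ne_of_ne hbi hbk] at hσ
        exact hσ (lt_trans hik hab)
      · by_cases hbi : b = i
        · subst hbi
          exfalso
          rw [Equiv.swap_apply_left, Equiv.swap_apply_of_ne_of_ne (ne_of_lt hab) hak] at hσ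
          exact hσ (lt_trans hab hik)
        · by_cases hbk : b = k
          · subst hbk
            rw [Equiv.swap_apply_right, Equiv.swap_apply_of_ne_of_ne hai hak] at hσ hw
            have halt : i < a := lt_of_le_of_ne (not_lt.1 hσ) (Ne.symm hai)
            have := hmid a halt hab
            have hne2 : u a ≠ u b := u.injective.ne hak
            rcases lt_or_gt_of_ne hne2 with h | h
            · exact absurd ⟨hw, h⟩ this
            · exact h
          · exfalso
            rw [Equiv.swap_apply_of_ne_of_ne hai hak, Equiv.swap_apply_of_ne_of_ne hbi hbk] at hσ
            exact hσ hab

lemma invLen_mul_swap_le (u : Perm (Fin n)) {i k : Fin n} (hik : i < k) (hu : u i < u k)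
    (hmid : ∀ j : Fin n, i < j → j < k → ¬(u i < u j ∧ u j < u k)) :
    invLen (u * Equiv.swap i k) ≤ invLen u + 1 := by
  have hinj := phi_injOn i k (S := (Invs (u * Equiv.swap i k)).erase (i, k))
    (fun p hp => ((Finset.mem_filter.1 (Finset.mem_of_mem_erase hp)).2).1)
  have hcard := Finset.card_le_card_of_injOn _ (phi_maps_B u hik hu hmid) hinj
  rw [Finset.card_erase_of_mem (mem_invs_swap u hik hu)] at hcard
  rw [invLen_eq_card, invLen_eq_card]
  omega

lemma invLen_mul_swap_eq (u : Perm (Fin n)) {i k : Fin n} (hik : i < k) (hu : u i < u k)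
    (hmid : ∀ j : Fin n, i < j → j < k → ¬(u i < u j ∧ u j < u k)) :
    invLen (u * Equiv.swap i k) = invLen u + 1 :=
  le_antisymm (invLen_mul_swap_le u hik hu hmid) (invLen_lt_mul_swap u hik hu)

def Dom (u v : Perm (Fin n)) : Prop := ∀ r j, dd u r j ≤ dd v r j

lemma mul_swap_swap (u : Perm (Fin n)) (i k : Fin n) :
    u * Equiv.swap i k * Equiv.swap i k = u := by
  rw [mul_assoc, Equiv.swap_mul_self, mul_one]

lemma step_ordered {u v : Perm (Fin n)} (h : BruhatStep u v) :
    ∃ i k : Fin n, i < k ∧ u i < u k ∧ v = u * Equiv.swap i k := by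
  obtain ⟨⟨t, ⟨i, j, hne, ht⟩, hv⟩, hlen⟩ := h
  subst ht
  wlog hij : i < j generalizing i j
  · exact this j i hne.symm (by rwa [Equiv.swap_comm]) ((hne.lt_or_gt).resolve_left hij)
  refine ⟨i, j, hij, ?_, hv⟩
  by_contra hno
  have hne2 : u i ≠ u j := u.injective.ne hne
  have hlt : u j < u i := (hne2.lt_or_gt).resolve_left hno
  have hvi : v i = u j := by rw [hv]; exact congrArg u (Equiv.swap_apply_left i j)
  have hvj : v j = u i := by rw [hv]; exact congrArg u (Equiv.swap_apply_right i j)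
  have h2 : invLen v < invLen (v * Equiv.swap i j) := by
    apply invLen_lt_mul_swap v hij
    rw [hvi, hvj]; exact hlt
  rw [hv, mul_swap_swap] at h2
  rw [hv] at hlen
  omega

lemma step_dom {u v : Perm (Fin n)} (h : BruhatStep u v) : Dom u v := by
  obtain ⟨i, k, hik, hu, hv⟩ := step_ordered h
  intro r j
  rw [hv, dd_mul_swap u hik hu]
  split_ifs <;> omega

lemma dom_of_le {u v : Perm (Fin n)} (h : BruhatLE u v) : Dom u v := by
  induction h with
  | refl => exact fun r j => le_refl _
  | tail _ hstep ih => exact fun r j => le_trans (ih r j) (step_dom hstep r j)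

lemma invLen_le_of_le {u v : Perm (Fin n)} (h : BruhatLE u v) : invLen u ≤ invLen v := by
  induction h with
  | refl => exact le_refl _
  | tail _ hstep ih => exact le_trans ih (le_of_lt hstep.2)

lemma invLen_lt_of_lt {u v : Perm (Fin n)} (h : BruhatLT u v) : invLen u < invLen v := by
  obtain ⟨hle, hne⟩ := h
  rcases (Relation.ReflTransGen.cases_head hle) with rfl | ⟨w, hstep, hle'⟩
  · exact absurd rfl hne
  · exact lt_of_lt_of_le hstep.2 (invLen_le_of_le hle')

lemma exists_invMinimal {u v : Perm (Fin n)} (h : BruhatLT u v) :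
    ∃ i k : Fin n, InvMinimal u v i k := by
  classical
  set S : Finset (Fin n × Fin n) :=
    Finset.univ.filter fun p => p.1 < p.2 ∧ v p.2 < v p.1 ∧ u p.1 < u p.2 with hS
  have hSne : S.Nonempty := by
    by_contra hS0
    rw [Finset.not_nonempty_iff_eq_empty] at hS0
    have hsub : Invs v ⊆ Invs u := by
      intro p hp
      rw [Invs, Finset.mem_filter] at hp ⊢
      obtain ⟨-, h1, h2⟩ := hp
      refine ⟨Finset.mem_univ _, h1, ?_⟩
      have hpne : u p.1 ≠ u p.2 := u.injective.ne (ne_of_lt h1)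
      rcases hpne.lt_or_gt with hlt | hlt
      · exfalso
        have : p ∈ S := by rw [hS, Finset.mem_filter]; exact ⟨Finset.mem_univ _, h1, h2, hlt⟩
        rw [hS0] at this
        exact absurd this (Finset.notMem_empty p)
      · exact hlt
    have := Finset.card_le_card hsub
    have hlt := invLen_lt_of_lt h
    rw [invLen_eq_card, invLen_eq_card] at hlt
    omega
  obtain ⟨p, hpS, hpmin⟩ := S.exists_min_image (fun p => (p.2 : ℕ) - (p.1 : ℕ)) hSne
  rw [hS, Finset.mem_filter] at hpS
  obtain ⟨-, h1, h2, h3⟩ := hpS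
  refine ⟨p.1, p.2, h1, h2, h3, ?_⟩
  intro a b hia hab hbk hnab ⟨hv1, hu1⟩
  have hq : (a, b) ∈ S := by rw [hS, Finset.mem_filter]; exact ⟨Finset.mem_univ _, hab, hv1, hu1⟩
  have := hpmin (a, b) hq
  simp only at this
  have hia' : (p.1 : ℕ) ≤ (a : ℕ) := hia
  have hab' : (a : ℕ) < (b : ℕ) := hab
  have hbk' : (b : ℕ) ≤ (p.2 : ℕ) := hbk
  have h1' : (p.1 : ℕ) < (p.2 : ℕ) := h1
  have : ¬ (a = p.1 ∧ b = p.2) := hnab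
  have hcase : (p.1 : ℕ) < (a : ℕ) ∨ (b : ℕ) < (p.2 : ℕ) := by
    by_contra hc
    push_neg at hc
    exact this ⟨Fin.ext (le_antisymm hc.1 hia'), Fin.ext (le_antisymm hbk' hc.2)⟩
  omega

lemma dd_strict {u v : Perm (Fin n)} (hdom : Dom u v) {i k : Fin n}
    (hmin : InvMinimal u v i k) {r j : ℕ} (hir : (i:ℕ) < r) (hrk : r ≤ (k:ℕ))
    (hj : ((u i:ℕ) < j ∧ j ≤ ((v i:ℕ))) ∨ (((v k:ℕ)) < j ∧ j ≤ ((u k:ℕ)))) :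
    dd u r j < dd v r j := by
  classical
  obtain ⟨hik, hvki, huik, hminq⟩ := hmin
  by_contra hcon
  have heq : dd u r j = dd v r j := le_antisymm (hdom r j) (not_lt.1 hcon)
  rcases hj with ⟨hj1, hj2⟩ | ⟨hj1, hj2⟩
  · -- left case
    have hsu := dd_split u (show (i:ℕ)+1 ≤ r from hir) j
    have hsv := dd_split v (show (i:ℕ)+1 ≤ r from hir) j
    have hcu := dd_succ u i j
    have hcv := dd_succ v i j
    rw [if_neg (show ¬ j ≤ ((u i:ℕ)) by omega)] at hcu
    rw [if_pos hj2] at hcv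
    have hdomi := hdom (i:ℕ) j
    have hcard : (Finset.univ.filter fun a : Fin n =>
          (i:ℕ)+1 ≤ (a:ℕ) ∧ (a:ℕ) < r ∧ j ≤ (v a : ℕ)).card
        < (Finset.univ.filter fun a : Fin n =>
          (i:ℕ)+1 ≤ (a:ℕ) ∧ (a:ℕ) < r ∧ j ≤ (u a : ℕ)).card := by omega
    obtain ⟨a, hPa, hQa⟩ := card_lt_exists hcard
    obtain ⟨ha1, ha2, ha3⟩ := hPa
    have hva : (v a : ℕ) < j := by
      by_contra hc
      exact hQa ⟨ha1, ha2, not_lt.1 hc⟩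
    have hia : i < a := by rw [Fin.lt_def]; omega
    have hak : a ≤ k := by rw [Fin.le_def]; omega
    have hankk : ¬ (i = i ∧ a = k) := by
      rintro ⟨-, rfl⟩
      omega
    exact hminq i a (le_refl i) hia hak hankk
      ⟨by rw [Fin.lt_def]; omega, by rw [Fin.lt_def]; omega⟩
  · -- right case
    have hsu := dd_split u (show r ≤ (k:ℕ) from hrk) j
    have hsv := dd_split v (show r ≤ (k:ℕ) from hrk) j
    have hcu := dd_succ u k j
    have hcv := dd_succ v k j
    rw [if_pos hj2] at hcu
    rw [if_neg (by omega)] at hcv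
    have hdomk := hdom ((k:ℕ)+1) j
    have hcard : (Finset.univ.filter fun a : Fin n =>
          r ≤ (a:ℕ) ∧ (a:ℕ) < (k:ℕ) ∧ j ≤ (u a : ℕ)).card
        < (Finset.univ.filter fun a : Fin n =>
          r ≤ (a:ℕ) ∧ (a:ℕ) < (k:ℕ) ∧ j ≤ (v a : ℕ)).card := by omega
    obtain ⟨a, hPa, hQa⟩ := card_lt_exists hcard
    obtain ⟨ha1, ha2, ha3⟩ := hPa
    have hua : (u a : ℕ) < j := by
      by_contra hc
      exact hQa ⟨ha1, ha2, not_lt.1 hc⟩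
    have hia : i ≤ a := by rw [Fin.le_def]; omega
    have hak : a < k := by rw [Fin.lt_def]; omega
    have hankk : ¬ (a = i ∧ k = k) := by
      rintro ⟨rfl, -⟩
      rw [Fin.le_def] at hia
      omega
    exact hminq a k hia hak (le_refl k) hankk
      ⟨by rw [Fin.lt_def]; omega, by rw [Fin.lt_def]; omega⟩

def measureA (u v : Perm (Fin n)) : ℕ :=
  ∑ p ∈ (Finset.range (n+1)) ×ˢ (Finset.range (n+1)), (dd v p.1 p.2 - dd u p.1 p.2)

lemma dom_step {u v : Perm (Fin n)} (hdom : Dom u v) (hne : u ≠ v) :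
    ∃ u', BruhatStep u u' ∧ Dom u' v ∧ measureA u' v < measureA u v := by
  classical
  have hne' : ∃ a, u a ≠ v a := by
    by_contra hc
    push_neg at hc
    exact hne (Equiv.ext hc)
  obtain ⟨a0, ha0⟩ := hne'
  set D : Finset (Fin n) := Finset.univ.filter (fun a : Fin n => u a ≠ v a) with hD
  have hDne : D.Nonempty := ⟨a0, by rw [hD, Finset.mem_filter]; exact ⟨Finset.mem_univ _, ha0⟩⟩
  set i := D.min' hDne with hidef
  have hi : u i ≠ v i := by
    have hmem : i ∈ D := D.min'_mem hDne
    rw [hD, Finset.mem_filter] at hmem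
    exact hmem.2
  have hprefix : ∀ a : Fin n, (a:ℕ) < (i:ℕ) → u a = v a := by
    intro a ha
    by_contra hc
    have haD : a ∈ D := by rw [hD, Finset.mem_filter]; exact ⟨Finset.mem_univ _, hc⟩
    have := D.min'_le a haD
    rw [Fin.le_def] at this
    omega
  -- u i < v i
  have hui : (u i : ℕ) < (v i : ℕ) := by
    have h1 := hdom ((i:ℕ)+1) ((u i : ℕ))
    rw [dd_succ u i, dd_succ v i, if_pos (le_refl _), dd_congr_prefix hprefix _] at h1
    have hnev : (u i : ℕ) ≠ (v i : ℕ) := fun h => hi (Fin.ext h)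
    by_contra hc
    rw [if_neg (by omega)] at h1
    omega
  -- the set K and its minimum k
  set K : Finset (Fin n) :=
    Finset.univ.filter (fun a : Fin n => i < a ∧ u i < u a ∧ (u a:ℕ) ≤ (v i:ℕ)) with hK
  have hKne : K.Nonempty := by
    refine ⟨u.symm (v i), ?_⟩
    have hk0 : u (u.symm (v i)) = v i := u.apply_symm_apply (v i)
    have hk0i : u.symm (v i) ≠ i := by
      intro h
      rw [h] at hk0
      exact hi hk0
    have hnlt : ¬ ((u.symm (v i) : ℕ) < (i:ℕ)) := by
      intro hlt
      have := hprefix _ hlt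
      rw [hk0] at this
      exact hk0i (v.injective this.symm)
    rw [hK, Finset.mem_filter]
    refine ⟨Finset.mem_univ _, ?_, ?_, ?_⟩
    · rw [Fin.lt_def]
      have : (u.symm (v i) : ℕ) ≠ (i : ℕ) := fun h => hk0i (Fin.ext h)
      omega
    · rw [Fin.lt_def, hk0]; omega
    · rw [hk0]
  set k := K.min' hKne with hkdef
  have hkmem : k ∈ K := K.min'_mem hKne
  rw [hK, Finset.mem_filter] at hkmem
  obtain ⟨-, hik, hk1, hk2⟩ := hkmem
  have hikv : (i:ℕ) < (k:ℕ) := hik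
  have hk1v : (u i : ℕ) < (u k : ℕ) := hk1
  -- the new permutation
  have hdom' : Dom (u * Equiv.swap i k) v := by
    intro r j
    rw [dd_mul_swap u hik hk1 r j]
    by_cases hbox : (i:ℕ) < r ∧ r ≤ (k:ℕ) ∧ (u i:ℕ) < j ∧ j ≤ (u k:ℕ)
    · rw [if_pos hbox]
      obtain ⟨hb1, hb2, hb3, hb4⟩ := hbox
      suffices h : dd u r j < dd v r j by omega
      by_contra hc
      have heq : dd u r j = dd v r j := le_antisymm (hdom r j) (not_lt.1 hc)
      set J := (v i:ℕ)+1 with hJ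
      have hjJ : j ≤ J := by omega
      have htu := dd_thresh u r hjJ
      have htv := dd_thresh v r hjJ
      have hdJ := hdom r J
      have hiMv : i ∈ Finset.univ.filter
          (fun a : Fin n => (a:ℕ) < r ∧ j ≤ (v a : ℕ) ∧ (v a : ℕ) < J) := by
        rw [Finset.mem_filter]
        exact ⟨Finset.mem_univ _, hb1, by omega, by omega⟩
      have hex : ∃ a ∈ Finset.univ.filter
          (fun a : Fin n => (a:ℕ) < r ∧ j ≤ (u a : ℕ) ∧ (u a : ℕ) < J),
          (i:ℕ) < (a:ℕ) := by
        by_contra hno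
        push_neg at hno
        have hsub : Finset.univ.filter
            (fun a : Fin n => (a:ℕ) < r ∧ j ≤ (u a : ℕ) ∧ (u a : ℕ) < J)
            ⊆ (Finset.univ.filter
            (fun a : Fin n => (a:ℕ) < r ∧ j ≤ (v a : ℕ) ∧ (v a : ℕ) < J)).erase i := by
          intro a haMu
          have hvals := Finset.mem_filter.1 haMu
          obtain ⟨-, har, haj, haJ⟩ := hvals
          have hne3 : a ≠ i := by
            intro h
            rw [h] at haj
            omega
          have hlt : (a:ℕ) < (i:ℕ) := by
            have h1 := hno a haMu
            have h2 : (a:ℕ) ≠ (i:ℕ) := fun h => hne3 (Fin.ext h)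
            omega
          rw [Finset.mem_erase, Finset.mem_filter]
          rw [hprefix a hlt] at haj haJ
          exact ⟨hne3, Finset.mem_univ _, har, haj, haJ⟩
        have hcge := Finset.card_le_card hsub
        rw [Finset.card_erase_of_mem hiMv] at hcge
        have hge1 : 1 ≤ (Finset.univ.filter
            (fun a : Fin n => (a:ℕ) < r ∧ j ≤ (v a : ℕ) ∧ (v a : ℕ) < J)).card :=
          Finset.card_pos.2 ⟨i, hiMv⟩
        omega
      obtain ⟨a, haMu, hia⟩ := hex
      have hvals := Finset.mem_filter.1 haMu
      obtain ⟨-, har, haj, haJ⟩ := hvals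
      have haK : a ∈ K := by
        rw [hK, Finset.mem_filter]
        refine ⟨Finset.mem_univ _, ?_, ?_, by omega⟩
        · rw [Fin.lt_def]; omega
        · rw [Fin.lt_def]; omega
      have := K.min'_le a haK
      rw [← hkdef, Fin.le_def] at this
      omega
    · rw [if_neg hbox]
      simpa using hdom r j
  refine ⟨u * Equiv.swap i k,
    ⟨⟨Equiv.swap i k, ⟨i, k, ne_of_lt hik, rfl⟩, rfl⟩, invLen_lt_mul_swap u hik hk1⟩, hdom', ?_⟩
  · -- measure decreases
    apply Finset.sum_lt_sum
    · intro p hp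
      have := dd_mul_swap u hik hk1 p.1 p.2
      have hd := hdom p.1 p.2
      split_ifs at this <;> omega
    · refine ⟨((i:ℕ)+1, (u k:ℕ)), ?_, ?_⟩
      · rw [Finset.mem_product, Finset.mem_range, Finset.mem_range]
        exact ⟨by have := i.isLt; omega, by have := (u k).isLt; omega⟩
      · have hcell := dd_mul_swap u hik hk1 ((i:ℕ)+1) ((u k:ℕ))
        rw [if_pos ⟨by omega, by omega, hk1v, le_refl _⟩] at hcell
        have hd := hdom' ((i:ℕ)+1) ((u k:ℕ))
        rw [hcell] at hd
        simp only
        omega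

lemma le_of_dom_aux : ∀ (N : ℕ) (u v : Perm (Fin n)), Dom u v → measureA u v ≤ N → BruhatLE u v := by
  intro N
  induction N with
  | zero =>
    intro u v hdom hA
    by_cases hne : u = v
    · exact hne ▸ Relation.ReflTransGen.refl
    · obtain ⟨u', -, -, hlt⟩ := dom_step hdom hne
      omega
  | succ N ih =>
    intro u v hdom hA
    by_cases hne : u = v
    · exact hne ▸ Relation.ReflTransGen.refl
    · obtain ⟨u', hstep, hdom', hlt⟩ := dom_step hdom hne
      exact Relation.ReflTransGen.head hstep (ih u' v hdom' (by omega))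

lemma le_of_dom {u v : Perm (Fin n)} (hdom : Dom u v) : BruhatLE u v :=
  le_of_dom_aux (measureA u v) u v hdom (le_refl _)

lemma gen_lifting {u v : Perm (Fin n)} (h : BruhatLT u v) :
    ∃ t : Perm (Fin n), IsTransposition t ∧ BruhatCov u (u * t) ∧ BruhatLE (u * t) v ∧
      BruhatCov (v * t) v ∧ BruhatLE u (v * t) := by
  obtain ⟨i, k, hmin⟩ := exists_invMinimal h
  obtain ⟨hik, hvki, huik, hminq⟩ := hmin
  have hmin' : InvMinimal u v i k := ⟨hik, hvki, huik, hminq⟩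
  have hdom := dom_of_le h.1
  have hikv : (i:ℕ) < (k:ℕ) := hik
  have hvkiv : (v k : ℕ) < (v i : ℕ) := hvki
  have huikv : (u i : ℕ) < (u k : ℕ) := huik
  -- no middle value for u
  have hMu : ∀ jj : Fin n, i < jj → jj < k → ¬(u i < u jj ∧ u jj < u k) := by
    rintro jj h1 h2 ⟨ha, hb⟩
    have c1 := hminq i jj (le_refl i) h1 (le_of_lt h2) (fun hp => (ne_of_lt h2) hp.2)
    have c2 := hminq jj k (le_of_lt h1) h2 (le_refl k) (fun hp => (ne_of_gt h1) hp.1)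
    have d1 : ¬ (v jj < v i) := fun hvd => c1 ⟨hvd, ha⟩
    have d2 : ¬ (v k < v jj) := fun hvd => c2 ⟨hvd, hb⟩
    have e1 : v i < v jj :=
      lt_of_le_of_ne (not_lt.1 d1) (Ne.symm (v.injective.ne (ne_of_gt h1)))
    have e2 : v jj < v k :=
      lt_of_le_of_ne (not_lt.1 d2) (v.injective.ne (ne_of_lt h2))
    exact absurd (lt_trans e1 e2) (not_lt.2 (le_of_lt hvki))
  -- the coatom permutation w = v * t
  have hwi : (v * Equiv.swap i k) i = v k := congrArg v (Equiv.swap_apply_left i k)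
  have hwk : (v * Equiv.swap i k) k = v i := congrArg v (Equiv.swap_apply_right i k)
  have hwj : ∀ jj : Fin n, jj ≠ i → jj ≠ k → (v * Equiv.swap i k) jj = v jj :=
    fun jj h1 h2 => congrArg v (Equiv.swap_apply_of_ne_of_ne h1 h2)
  have hwik : (v * Equiv.swap i k) i < (v * Equiv.swap i k) k := by
    rw [hwi, hwk]; exact hvki
  have hMw : ∀ jj : Fin n, i < jj → jj < k →
      ¬((v * Equiv.swap i k) i < (v * Equiv.swap i k) jj ∧
        (v * Equiv.swap i k) jj < (v * Equiv.swap i k) k) := by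
    rintro jj h1 h2 ⟨ha, hb⟩
    rw [hwi, hwj jj (ne_of_gt h1) (ne_of_lt h2)] at ha
    rw [hwk, hwj jj (ne_of_gt h1) (ne_of_lt h2)] at hb
    have c1 := hminq i jj (le_refl i) h1 (le_of_lt h2) (fun hp => (ne_of_lt h2) hp.2)
    have c2 := hminq jj k (le_of_lt h1) h2 (le_refl k) (fun hp => (ne_of_gt h1) hp.1)
    have d1 : ¬ (u i < u jj) := fun hud => c1 ⟨hb, hud⟩
    have d2 : ¬ (u jj < u k) := fun hud => c2 ⟨ha, hud⟩
    have e1 : u jj < u i :=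
      lt_of_le_of_ne (not_lt.1 d1) (u.injective.ne (ne_of_gt h1))
    have e2 : u k < u jj :=
      lt_of_le_of_ne (not_lt.1 d2) (Ne.symm (u.injective.ne (ne_of_lt h2)))
    exact absurd (lt_trans e2 e1) (not_lt.2 (le_of_lt huik))
  have hwv : (v * Equiv.swap i k) * Equiv.swap i k = v := mul_swap_swap v i k
  have htrans : IsTransposition (Equiv.swap i k) := ⟨i, k, ne_of_lt hik, rfl⟩
  refine ⟨Equiv.swap i k, htrans, ⟨?_, ?_⟩, ?_, ⟨?_, ?_⟩, ?_⟩
  · exact Relation.ReflTransGen.single ⟨⟨_, htrans, rfl⟩, invLen_lt_mul_swap u hik huik⟩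
  · exact invLen_mul_swap_eq u hik huik hMu
  · -- BruhatLE (u * t) v
    apply le_of_dom
    intro r j
    rw [dd_mul_swap u hik huik r j]
    by_cases hbox : (i:ℕ) < r ∧ r ≤ (k:ℕ) ∧ (u i:ℕ) < j ∧ j ≤ (u k:ℕ)
    · rw [if_pos hbox]
      obtain ⟨hb1, hb2, hb3, hb4⟩ := hbox
      have hstrict : dd u r j < dd v r j := by
        apply dd_strict hdom hmin' hb1 hb2
        by_cases hcase : j ≤ (v i : ℕ)
        · exact Or.inl ⟨hb3, hcase⟩
        · exact Or.inr ⟨by omega, hb4⟩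
      omega
    · rw [if_neg hbox]
      simpa using hdom r j
  · -- BruhatLE (v*t) v (cover part: le)
    refine Relation.ReflTransGen.single ⟨⟨_, htrans, hwv.symm⟩, ?_⟩
    have := invLen_lt_mul_swap (v * Equiv.swap i k) hik hwik
    rwa [hwv] at this
  · -- invLen v = invLen (v*t) + 1
    have := invLen_mul_swap_eq (v * Equiv.swap i k) hik hwik hMw
    rwa [hwv] at this
  · -- BruhatLE u (v * t)
    apply le_of_dom
    intro r j
    have hcell := dd_mul_swap (v * Equiv.swap i k) hik hwik r j
    rw [hwv, hwi, hwk] at hcell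
    by_cases hbox : (i:ℕ) < r ∧ r ≤ (k:ℕ) ∧ (v k:ℕ) < j ∧ j ≤ (v i:ℕ)
    · rw [if_pos hbox] at hcell
      obtain ⟨hb1, hb2, hb3, hb4⟩ := hbox
      have hstrict : dd u r j < dd v r j := by
        apply dd_strict hdom hmin' hb1 hb2
        by_cases hcase : (u i : ℕ) < j
        · exact Or.inl ⟨hcase, hb4⟩
        · exact Or.inr ⟨hb3, by omega⟩
      omega
    · rw [if_neg hbox] at hcell
      have := hdom r j
      omega

lemma main_aux : ∀ (N : ℕ) (u v : Perm (Fin n)), BruhatLT u v → invLen v - invLen u ≤ N →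
    ∃ (l : ℕ) (x : ℕ → Perm (Fin n)), x 0 = u ∧ x l = v ∧
      ∀ m < l, BruhatCov (x m) (x (m + 1)) ∧
        ∃ t : Perm (Fin n), IsTransposition t ∧ x (m + 1) = x m * t ∧
          BruhatCov (v * t) v ∧ BruhatLE u (v * t) := by
  intro N
  induction N with
  | zero =>
    intro u v h hN
    have := invLen_lt_of_lt h
    omega
  | succ N ih =>
    intro u v h hN
    obtain ⟨t, htrans, hcovu, hle1, hcovv, hle2⟩ := gen_lifting h
    by_cases hend : u * t = v
    · refine ⟨1, fun m => if m = 0 then u else v, by simp, by simp, ?_⟩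
      intro m hm
      interval_cases m
      simp only [if_pos rfl, if_neg one_ne_zero]
      exact ⟨hend ▸ hcovu, t, htrans, hend.symm, hcovv, hle2⟩
    · have hlt' : BruhatLT (u * t) v := ⟨hle1, hend⟩
      have hNN : invLen v - invLen (u * t) ≤ N := by
        have h1 := hcovu.2
        have h2 := invLen_lt_of_lt h
        omega
      obtain ⟨l, x, hx0, hxl, hchain⟩ := ih (u * t) v hlt' hNN
      refine ⟨l + 1, fun m => if m = 0 then u else x (m - 1), by simp, by simp [hxl], ?_⟩
      intro m hm
      match m with
      | 0 =>
        simp only [if_pos rfl, if_neg one_ne_zero]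
        refine ⟨?_, t, htrans, ?_, hcovv, hle2⟩
        · show BruhatCov u (x (1 - 1))
          rw [show (1:ℕ) - 1 = 0 from rfl, hx0]
          exact hcovu
        · show x (1 - 1) = u * t
          rw [show (1:ℕ) - 1 = 0 from rfl, hx0]
      | (m' + 1) =>
        have hm' : m' < l := by omega
        obtain ⟨hcov, t', ht', heq', hcovv', hlev'⟩ := hchain m' hm'
        simp only [if_neg (Nat.succ_ne_zero m'), if_neg (Nat.succ_ne_zero (m'+1)),
          Nat.add_sub_cancel]
        refine ⟨hcov, t', ht', heq', hcovv', ?_⟩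
        · exact Relation.ReflTransGen.trans hcovu.1 hlev'
  
end Aux

/-- For `u < v` there is a maximal chain from `u` to `v` all of whose steps use
coatom transpositions of the interval `[u,v]`. -/
theorem stmt7 (n : ℕ) (u v : Perm (Fin n)) (h : BruhatLT u v) :
    ∃ (l : ℕ) (x : ℕ → Perm (Fin n)), x 0 = u ∧ x l = v ∧
      ∀ m < l, BruhatCov (x m) (x (m + 1)) ∧
        ∃ t : Perm (Fin n), IsTransposition t ∧ x (m + 1) = x m * t ∧
          BruhatCov (v * t) v ∧ BruhatLE u (v * t) := by
  exact main_aux (invLen v - invLen u) u v h (le_refl _)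
end

section
/- Let u, v ∈ S_n, suppose (i k) is inversion-minimal on (u,v), and suppose for some j with i < j < k−1 that v(j) > v(j+1) and u(j) > u(j+1). Then (i k) is inversion-minimal on (u·s_j, v·s_j), where s_j = (j, j+1). -/
open Equiv

/-- If `(i k)` is inversion-minimal on `(u,v)`, `i < j`, `j + 1 < k`, and both
`v` and `u` descend at position `j`, then `(i k)` is inversion-minimal on
`(u s_j, v s_j)`. -/
theorem stmt15 (n : ℕ) (u v : Perm (Fin n)) (i k : Fin n) (hmin : InvMinimal u v i k)
    (j : Fin n) (hj : (j : ℕ) + 1 < n) (hij : i < j) (hjk : (j : ℕ) + 1 < (k : ℕ))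
    (hv : v ⟨(j : ℕ) + 1, hj⟩ < v j) (hu : u ⟨(j : ℕ) + 1, hj⟩ < u j) :
    InvMinimal (u * Equiv.swap j ⟨(j : ℕ) + 1, hj⟩)
      (v * Equiv.swap j ⟨(j : ℕ) + 1, hj⟩) i k := by
  obtain ⟨hik, hvik, huik, hmin4⟩ := hmin
  set j' : Fin n := ⟨(j : ℕ) + 1, hj⟩ with hj'def
  have hjj' : j < j' := by simp [Fin.lt_def, hj'def]
  have hij' : i < j' := lt_trans hij hjj'
  have hj'k : j' < k := by simpa [Fin.lt_def, hj'def] using hjk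
  have hjklt : j < k := lt_trans hjj' hj'k
  have hsi : Equiv.swap j j' i = i :=
    Equiv.swap_apply_of_ne_of_ne hij.ne hij'.ne
  have hsk : Equiv.swap j j' k = k :=
    Equiv.swap_apply_of_ne_of_ne hjklt.ne' hj'k.ne'
  refine ⟨hik, ?_, ?_, ?_⟩
  · simpa [Equiv.Perm.mul_apply, hsi, hsk] using hvik
  · simpa [Equiv.Perm.mul_apply, hsi, hsk] using huik
  · intro p q hip hpq hqk hne h
    obtain ⟨hvpq, hupq⟩ := h
    simp only [Equiv.Perm.mul_apply] at hvpq hupq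
    by_cases hpj : p = j
    · by_cases hqj' : q = j'
      · rw [hpj, hqj', Equiv.swap_apply_left, Equiv.swap_apply_right] at hvpq
        exact absurd hvpq (asymm hv)
      · have hqj : q ≠ j := fun h => hpq.ne (hpj.trans h.symm)
        have hj'q : j' < q := by
          have h1 : (p : ℕ) < (q : ℕ) := hpq
          have h2 : (q : ℕ) ≠ (j' : ℕ) := fun h => hqj' (Fin.ext h)
          have h3 : (p : ℕ) = (j : ℕ) := by rw [hpj]
          have h4 : (j' : ℕ) = (j : ℕ) + 1 := rfl
          simp only [Fin.lt_def]
          omega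
        rw [hpj, Equiv.swap_apply_left,
          Equiv.swap_apply_of_ne_of_ne hqj hqj'] at hvpq hupq
        exact hmin4 j' q hij'.le hj'q hqk (fun h => hij'.ne' h.1) ⟨hvpq, hupq⟩
    · by_cases hpj' : p = j'
      · have hj'q : j' < q := hpj' ▸ hpq
        have hqj' : q ≠ j' := hj'q.ne'
        have hqj : q ≠ j := (lt_trans hjj' hj'q).ne'
        rw [hpj', Equiv.swap_apply_right,
          Equiv.swap_apply_of_ne_of_ne hqj hqj'] at hvpq hupq
        exact hmin4 j q hij.le (lt_trans hjj' hj'q) hqk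
          (fun h => hij.ne' h.1) ⟨hvpq, hupq⟩
      · rw [Equiv.swap_apply_of_ne_of_ne hpj hpj'] at hvpq hupq
        by_cases hqj : q = j
        · have hpltj : p < j := hqj ▸ hpq
          rw [hqj, Equiv.swap_apply_left] at hvpq hupq
          exact hmin4 p j' hip (lt_trans hpltj hjj') hj'k.le
            (fun h => hj'k.ne h.2) ⟨hvpq, hupq⟩
        · by_cases hqj' : q = j'
          · rw [hqj', Equiv.swap_apply_right] at hvpq hupq
            have hpltj : p < j := by
              have h1 : (p : ℕ) < (j : ℕ) + 1 := by
                have := hpq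
                rw [hqj'] at this
                have h4 : (j' : ℕ) = (j : ℕ) + 1 := rfl
                rw [Fin.lt_def, h4] at this
                exact this
              have h2 : (p : ℕ) ≠ (j : ℕ) := fun h => hpj (Fin.ext h)
              simp only [Fin.lt_def]; omega
            exact hmin4 p j hip hpltj hjklt.le
              (fun h => hjklt.ne h.2) ⟨hvpq, hupq⟩
          · rw [Equiv.swap_apply_of_ne_of_ne hqj hqj'] at hvpq hupq
            exact hmin4 p q hip hpq hqk hne ⟨hvpq, hupq⟩
end

section
/- Let u ≤ v in S_n and let G^at be the directed graph on {1,...,n} with an edge {a,b} (a < b) whenever the transposition (a b) satisfies u ⋖ u·(a b) ≤ v. Then G^at has no increasing cycles: there is no cycle v_0 < v_1 < ⋯ < v_{k−1}, v_k = v_0 with every consecutive pair joined by an edge. In particular G^at is simple and triangle-free. -/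
open Equiv

section key

variable {n : ℕ} (u : Perm (Fin n)) (a b : Fin n)

/-- inversion set -/
def InvSet (z : Perm (Fin n)) : Finset (Fin n × Fin n) :=
  Finset.univ.filter fun p : Fin n × Fin n => p.1 < p.2 ∧ z p.2 < z p.1

lemma mem_InvSet {z : Perm (Fin n)} {p : Fin n × Fin n} :
    p ∈ InvSet z ↔ p.1 < p.2 ∧ z p.2 < z p.1 := by
  simp [InvSet]

/-- the map on pairs -/
def phi (p : Fin n × Fin n) : Fin n × Fin n :=
  if swap a b p.1 < swap a b p.2 then (swap a b p.1, swap a b p.2) else p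

lemma phi_maps (hab : a < b) (hu : u a < u b) :
    ∀ p ∈ InvSet u, phi a b p ∈ InvSet (u * swap a b) := by
  intro p hp
  rw [mem_InvSet] at hp
  obtain ⟨hlt, hinv⟩ := hp
  unfold phi
  by_cases h : swap a b p.1 < swap a b p.2
  · rw [if_pos h, mem_InvSet]
    refine ⟨h, ?_⟩
    simpa [Perm.mul_apply] using hinv
  · rw [if_neg h, mem_InvSet]
    refine ⟨hlt, ?_⟩
    -- case analysis: p.1, p.2 membership in {a,b}
    push_neg at h
    have hne : swap a b p.2 < swap a b p.1 := by
      rcases lt_or_eq_of_le h with h' | h'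
      · exact h'
      · exact absurd ((swap a b).injective h') (ne_of_gt hlt)
    simp only [Perm.mul_apply]
    by_cases h1a : p.1 = a
    · by_cases h2b : p.2 = b
      · -- p = (a,b): inversion means u b < u a, contradiction
        exact absurd hinv (by rw [h1a, h2b]; exact not_lt.2 (le_of_lt hu))
      · -- p.2 ≠ b, p.2 ≠ a (since p.1 = a < p.2)
        have h2a : p.2 ≠ a := by rw [h1a] at hlt; exact ne_of_gt hlt
        rw [h1a, swap_apply_left, swap_apply_of_ne_of_ne h2a h2b]
        rw [h1a] at hinv
        exact lt_trans hinv hu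
    · by_cases h1b : p.1 = b
      · -- p.1 = b, p.2 > b, so swap p.1 = a, swap p.2 = p.2 > b > a : h fails
        exfalso
        have h2b : p.2 ≠ b := ne_of_gt (h1b ▸ hlt)
        have h2a : p.2 ≠ a := ne_of_gt (lt_trans hab (h1b ▸ hlt))
        rw [h1b, swap_apply_right, swap_apply_of_ne_of_ne h2a h2b] at hne
        exact absurd hne (not_lt.2 (le_of_lt (lt_trans hab (h1b ▸ hlt))))
      · -- p.1 ∉ {a,b}
        rw [swap_apply_of_ne_of_ne h1a h1b] at hne ⊢
        by_cases h2a : p.2 = a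
        · exfalso
          rw [h2a, swap_apply_left] at hne
          exact absurd hne (not_lt.2 (le_of_lt (lt_trans (h2a ▸ hlt) hab)))
        · by_cases h2b : p.2 = b
          · rw [h2b, swap_apply_right]
            rw [h2b] at hinv
            exact lt_trans hu hinv
          · exfalso
            rw [swap_apply_of_ne_of_ne h2a h2b] at hne
            exact absurd hne (not_lt.2 (le_of_lt hlt))

lemma phi_injOn_s18 : Set.InjOn (phi a b) (InvSet u) := by
  intro p hp q hq hpq
  rw [Finset.mem_coe, mem_InvSet] at hp hq
  unfold phi at hpq
  by_cases h1 : swap a b p.1 < swap a b p.2 <;>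
  by_cases h2 : swap a b q.1 < swap a b q.2
  · rw [if_pos h1, if_pos h2] at hpq
    have e1 : swap a b p.1 = swap a b q.1 := congrArg Prod.fst hpq
    have e2 : swap a b p.2 = swap a b q.2 := congrArg Prod.snd hpq
    exact Prod.ext ((swap a b).injective e1) ((swap a b).injective e2)
  · rw [if_pos h1, if_neg h2] at hpq
    exfalso
    have e1 : swap a b p.1 = q.1 := congrArg Prod.fst hpq
    have e2 : swap a b p.2 = q.2 := congrArg Prod.snd hpq
    rw [← e1, ← e2, swap_apply_self, swap_apply_self] at h2
    exact h2 hp.1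
  · rw [if_neg h1, if_pos h2] at hpq
    exfalso
    have e1 : p.1 = swap a b q.1 := congrArg Prod.fst hpq
    have e2 : p.2 = swap a b q.2 := congrArg Prod.snd hpq
    rw [e1, e2] at h1
    rw [swap_apply_self, swap_apply_self] at h1
    exact h1 hq.1
  · rw [if_neg h1, if_neg h2] at hpq
    exact hpq

lemma phi_ne_ab (hab : a < b) (hu : u a < u b) :
    ∀ p ∈ InvSet u, phi a b p ≠ (a, b) := by
  intro p hp heq
  rw [mem_InvSet] at hp
  unfold phi at heq
  by_cases h : swap a b p.1 < swap a b p.2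
  · rw [if_pos h] at heq
    have e1 : swap a b p.1 = a := congrArg Prod.fst heq
    have e2 : swap a b p.2 = b := congrArg Prod.snd heq
    have : p.1 = b := by
      have := congrArg (swap a b) e1; rwa [swap_apply_self, swap_apply_left] at this
    have : p.2 = a := by
      have := congrArg (swap a b) e2; rwa [swap_apply_self, swap_apply_right] at this
    have hba : b < a := by
      calc b = p.1 := ‹p.1 = b›.symm
        _ < p.2 := hp.1
        _ = a := ‹p.2 = a›
    exact absurd hba (not_lt.2 (le_of_lt hab))
  · rw [if_neg h] at heq
    rw [heq] at hp
    exact absurd hp.2 (not_lt.2 (le_of_lt hu))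

lemma ab_mem_InvSet_w (hab : a < b) (hu : u a < u b) :
    (a, b) ∈ InvSet (u * swap a b) := by
  rw [mem_InvSet]
  refine ⟨hab, ?_⟩
  simp [Perm.mul_apply, hu]

/-- key1 -/
lemma key1 (hab : a < b) (hu : u a < u b) : invLen u < invLen (u * swap a b) := by
  have h1 : (InvSet u).card = ((InvSet u).image (phi a b)).card :=
    (Finset.card_image_of_injOn (phi_injOn_s18 u a b)).symm
  have h2 : (InvSet u).image (phi a b) ⊆ (InvSet (u * swap a b)).erase (a, b) := by
    intro q hq
    rw [Finset.mem_image] at hq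
    obtain ⟨p, hp, rfl⟩ := hq
    exact Finset.mem_erase.2 ⟨phi_ne_ab u a b hab hu p hp, phi_maps u a b hab hu p hp⟩
  have h3 := Finset.card_le_card h2
  have h4 : ((InvSet (u * swap a b)).erase (a, b)).card < (InvSet (u * swap a b)).card :=
    Finset.card_erase_lt_of_mem (ab_mem_InvSet_w u a b hab hu)
  show (InvSet u).card < (InvSet (u * swap a b)).card
  omega

lemma phi_ne_mid (hab : a < b) (hu : u a < u b) (c : Fin n) (hac : a < c) (hcb : c < b)
    (huac : u a < u c) (hucb : u c < u b) :
    ∀ p ∈ InvSet u, phi a b p ≠ (a, c) ∧ phi a b p ≠ (c, b) := by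
  have hca : c ≠ a := ne_of_gt hac
  have hcb' : c ≠ b := ne_of_lt hcb
  intro p hp
  rw [mem_InvSet] at hp
  constructor <;> intro heq <;> unfold phi at heq <;>
    by_cases h : swap a b p.1 < swap a b p.2
  · rw [if_pos h] at heq
    have e1 : swap a b p.1 = a := congrArg Prod.fst heq
    have e2 : swap a b p.2 = c := congrArg Prod.snd heq
    have hp1 : p.1 = b := by
      have := congrArg (swap a b) e1; rwa [swap_apply_self, swap_apply_left] at this
    have hp2 : p.2 = c := by
      have := congrArg (swap a b) e2
      rwa [swap_apply_self, swap_apply_of_ne_of_ne hca hcb'] at this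
    have : b < c := hp1 ▸ hp2 ▸ hp.1
    exact absurd this (not_lt.2 (le_of_lt hcb))
  · rw [if_neg h] at heq
    rw [heq] at hp
    exact absurd hp.2 (not_lt.2 (le_of_lt huac))
  · rw [if_pos h] at heq
    have e1 : swap a b p.1 = c := congrArg Prod.fst heq
    have e2 : swap a b p.2 = b := congrArg Prod.snd heq
    have hp1 : p.1 = c := by
      have := congrArg (swap a b) e1
      rwa [swap_apply_self, swap_apply_of_ne_of_ne hca hcb'] at this
    have hp2 : p.2 = a := by
      have := congrArg (swap a b) e2; rwa [swap_apply_self, swap_apply_right] at this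
    have : c < a := hp1 ▸ hp2 ▸ hp.1
    exact absurd this (not_lt.2 (le_of_lt hac))
  · rw [if_neg h] at heq
    rw [heq] at hp
    exact absurd hp.2 (not_lt.2 (le_of_lt hucb))

lemma key2 (hab : a < b) (hu : u a < u b) (c : Fin n) (hac : a < c) (hcb : c < b)
    (huac : u a < u c) (hucb : u c < u b) :
    invLen u + 3 ≤ invLen (u * swap a b) := by
  set w := u * swap a b with hw
  have hmac : (a, c) ∈ InvSet w := by
    rw [mem_InvSet]
    refine ⟨hac, ?_⟩
    have hcb' : c ≠ b := ne_of_lt hcb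
    have hca : c ≠ a := ne_of_gt hac
    simp only [hw, Perm.mul_apply, swap_apply_left, swap_apply_of_ne_of_ne hca hcb']
    exact hucb
  have hmcb : (c, b) ∈ InvSet w := by
    rw [mem_InvSet]
    refine ⟨hcb, ?_⟩
    have hcb' : c ≠ b := ne_of_lt hcb
    have hca : c ≠ a := ne_of_gt hac
    simp only [hw, Perm.mul_apply, swap_apply_right, swap_apply_of_ne_of_ne hca hcb']
    exact huac
  have hmab : (a, b) ∈ InvSet w := ab_mem_InvSet_w u a b hab hu
  set T1 := (InvSet w).erase (a, b) with hT1
  set T2 := T1.erase (a, c) with hT2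
  set T3 := T2.erase (c, b) with hT3
  have m1 : (a, c) ∈ T1 := Finset.mem_erase.2 ⟨by simp [ne_of_lt hcb], hmac⟩
  have m2 : (c, b) ∈ T2 := Finset.mem_erase.2 ⟨by simp [ne_of_gt hac],
    Finset.mem_erase.2 ⟨by simp [ne_of_gt hac], hmcb⟩⟩
  have hsub : (InvSet u).image (phi a b) ⊆ T3 := by
    intro q hq
    rw [Finset.mem_image] at hq
    obtain ⟨p, hp, rfl⟩ := hq
    have hmid := phi_ne_mid u a b hab hu c hac hcb huac hucb p hp
    refine Finset.mem_erase.2 ⟨hmid.2, Finset.mem_erase.2 ⟨hmid.1,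
      Finset.mem_erase.2 ⟨phi_ne_ab u a b hab hu p hp, phi_maps u a b hab hu p hp⟩⟩⟩
  have h1 : (InvSet u).card = ((InvSet u).image (phi a b)).card :=
    (Finset.card_image_of_injOn (phi_injOn_s18 u a b)).symm
  have h3 := Finset.card_le_card hsub
  have c3 : T3.card = T2.card - 1 := Finset.card_erase_of_mem m2
  have c2 : T2.card = T1.card - 1 := Finset.card_erase_of_mem m1
  have c1 : T1.card = (InvSet w).card - 1 := Finset.card_erase_of_mem hmab
  have hp1 : 0 < (InvSet w).card := Finset.card_pos.2 ⟨_, hmab⟩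
  have hp2 : 0 < T1.card := Finset.card_pos.2 ⟨_, m1⟩
  have hp3 : 0 < T2.card := Finset.card_pos.2 ⟨_, m2⟩
  show (InvSet u).card + 3 ≤ (InvSet w).card
  omega

lemma cover_props {u : Perm (Fin n)} {a b : Fin n} (hab : a < b)
    (hlen : invLen (u * swap a b) = invLen u + 1) :
    u a < u b ∧ ∀ c, a < c → c < b → ¬(u a < u c ∧ u c < u b) := by
  have hne : u a ≠ u b := fun h => (ne_of_lt hab) (u.injective h)
  have hu : u a < u b := by
    rcases lt_or_gt_of_ne hne with h | h
    · exact h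
    · exfalso
      set w := u * swap a b with hw
      have hwa : w a = u b := by simp [hw, Perm.mul_apply]
      have hwb : w b = u a := by simp [hw, Perm.mul_apply]
      have hwu : w a < w b := by rw [hwa, hwb]; exact h
      have := key1 w a b hab hwu
      have hws : w * swap a b = u := by
        rw [hw, mul_assoc, swap_mul_self, mul_one]
      rw [hws] at this
      omega
  refine ⟨hu, fun c hac hcb ⟨h1, h2⟩ => ?_⟩
  have := key2 u a b hab hu c hac hcb h1 h2
  omega

end key

/-- The atom graph `G^at` of a Bruhat interval `[u,v]` has no increasing cycles;
in particular it is triangle-free. -/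
theorem stmt18 (n : ℕ) (u v : Perm (Fin n)) (huv : BruhatLE u v)
    (E : Fin n → Fin n → Prop)
    (hE : E = fun a b =>
      a ≠ b ∧ BruhatCov u (u * Equiv.swap a b) ∧ BruhatLE (u * Equiv.swap a b) v) :
    (¬ ∃ (k : ℕ) (c : ℕ → Fin n), 3 ≤ k ∧ c k = c 0 ∧
        (∀ m, m + 1 < k → c m < c (m + 1)) ∧ (∀ m, m < k → E (c m) (c (m + 1)))) ∧
    (¬ ∃ a b c : Fin n, E a b ∧ E b c ∧ E a c) := by

  subst hE
  set E : Fin n → Fin n → Prop := fun a b =>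
      a ≠ b ∧ BruhatCov u (u * Equiv.swap a b) ∧ BruhatLE (u * Equiv.swap a b) v with hE
  have hsym : ∀ x y, E x y → E y x := by
    intro x y h
    rw [hE] at h ⊢
    exact ⟨h.1.symm, by rw [swap_comm]; exact h.2.1, by rw [swap_comm]; exact h.2.2⟩
  have hcp : ∀ x y : Fin n, x < y → E x y →
      u x < u y ∧ ∀ c, x < c → c < y → ¬(u x < u c ∧ u c < u y) := by
    intro x y hxy h
    rw [hE] at h
    exact cover_props hxy h.2.1.2
  have noTri : ∀ x y z : Fin n, x < y → y < z → E x y → E y z → E x z → False := by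
    intro x y z hxy hyz e1 e2 e3
    exact (hcp x z (hxy.trans hyz) e3).2 y hxy hyz ⟨(hcp x y hxy e1).1, (hcp y z hyz e2).1⟩
  constructor
  · rintro ⟨k, c, hk3, hck, hinc, hEd⟩
    have h01 : c 0 < c 1 := hinc 0 (by omega)
    have h12 : c 1 < c 2 := hinc 1 (by omega)
    have u01 : u (c 0) < u (c 1) := (hcp _ _ h01 (hEd 0 (by omega))).1
    have u12 : u (c 1) < u (c 2) := (hcp _ _ h12 (hEd 1 (by omega))).1
    have step : ∀ j, 2 ≤ j → j ≤ k - 1 → c 2 ≤ c j ∧ u (c 2) ≤ u (c j) := by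
      intro j h2
      induction j, h2 using Nat.le_induction with
      | base => intro _; exact ⟨le_refl _, le_refl _⟩
      | succ j hj ih =>
        intro hle
        have hc : c j < c (j + 1) := hinc j (by omega)
        have hu : u (c j) < u (c (j + 1)) := (hcp _ _ hc (hEd j (by omega))).1
        have prev := ih (by omega)
        exact ⟨le_trans prev.1 (le_of_lt hc), le_trans prev.2 (le_of_lt hu)⟩
    have hkm := step (k - 1) (by omega) (le_refl _)
    have h1km : c 1 < c (k - 1) := lt_of_lt_of_le h12 hkm.1
    have h0km : c 0 < c (k - 1) := lt_trans h01 h1km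
    have u1km : u (c 1) < u (c (k - 1)) := lt_of_lt_of_le u12 hkm.2
    have elast : E (c (k - 1)) (c 0) := by
      have h := hEd (k - 1) (by omega)
      have : k - 1 + 1 = k := by omega
      rw [this, hck] at h
      exact h
    exact (hcp (c 0) (c (k - 1)) h0km (hsym _ _ elast)).2 (c 1) h01 h1km ⟨u01, u1km⟩
  · rintro ⟨a, b, c, eab, ebc, eac⟩
    have hab : a ≠ b := by rw [hE] at eab; exact eab.1
    have hbc : b ≠ c := by rw [hE] at ebc; exact ebc.1
    have hac : a ≠ c := by rw [hE] at eac; exact eac.1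
    rcases lt_or_gt_of_ne hab with h1 | h1 <;>
      rcases lt_or_gt_of_ne hbc with h2 | h2 <;>
      rcases lt_or_gt_of_ne hac with h3 | h3
    · exact noTri a b c h1 h2 eab ebc eac
    · exact absurd (lt_trans h1 h2) (not_lt.2 (le_of_lt h3))
    · exact noTri a c b h3 h2 eac (hsym _ _ ebc) eab
    · exact noTri c a b h3 h1 (hsym _ _ eac) eab (hsym _ _ ebc)
    · exact noTri b a c h1 h3 (hsym _ _ eab) eac ebc
    · exact noTri b c a h2 h3 ebc (hsym _ _ eac) (hsym _ _ eab)
    · exact absurd (lt_trans h2 h1) (not_lt.2 (le_of_lt h3))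
    · exact noTri c b a h2 h1 (hsym _ _ ebc) (hsym _ _ eab) (hsym _ _ eac)
end
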